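/- arXiv:1707.09748 — 4 statements merged into one kernel-verified Lean document; each statement's English description precedes it below -/
import Mathlib

section
/- For every n ≥ 1, every τ ∈ 𝕋, and every ν ∈ {α, β, γ}, the para-orthogonal rational function Q_n^ν(z, τ) = φ_n^ν(z) + τ·φ_n^{ν*}(z) has exactly n zeros, all of which are simple and lie on 𝕋; equivalently, the numerator polynomial p_n^ν + τ·ς_n·p_n^{ν*} (of degree n) has n distinct roots, all on 𝕋, none of which is a root of π_n^ν. -/
noncomputable section
open MeasureTheory
open scoped Classical

namespace ORF

/-- complex conjugation -/
def conj' (z : ℂ) : ℂ := (starRingEnd ℂ) z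

/-- membership in the unit circle 𝕋 -/
def onT (z : ℂ) : Prop := ‖z‖ = 1

/-- `z` is a (strictly) positive real number -/
def posR (z : ℂ) : Prop := 0 < z.re ∧ z.im = 0

/-- σ_j = conj(α_j)/|α_j| (σ_j = 1 if α_j = 0, i.e. if β_j = ∞) -/
def sig (α : ℕ → ℂ) (j : ℕ) : ℂ :=
  if α j = 0 then 1 else conj' (α j) / ((‖α j‖ : ℝ) : ℂ)

/-- ς_n = ∏_{j=1}^n σ_j -/
def sigProd (α : ℕ → ℂ) (n : ℕ) : ℂ := ∏ j ∈ Finset.Icc 1 n, sig α j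

/-- ϖ_j^α(z) = 1 − conj(α_j)·z, as a polynomial in z -/
def wA (α : ℕ → ℂ) (j : ℕ) : Polynomial ℂ :=
  1 - Polynomial.C (conj' (α j)) * Polynomial.X

/-- ϖ_j^β(z) = 1 − conj(β_j)·z = 1 − z/α_j, and −z when β_j = ∞ (α_j = 0) -/
def wB (α : ℕ → ℂ) (j : ℕ) : Polynomial ℂ :=
  if α j = 0 then -Polynomial.X else 1 - Polynomial.C (α j)⁻¹ * Polynomial.X

/-- ϖ_j = ϖ_j^γ (γ_j = α_j when `c j`, γ_j = β_j otherwise) -/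
def wG (α : ℕ → ℂ) (c : ℕ → Bool) (j : ℕ) : Polynomial ℂ :=
  if c j then wA α j else wB α j

/-- π_n^α -/
def piA (α : ℕ → ℂ) (n : ℕ) : Polynomial ℂ := ∏ j ∈ Finset.Icc 1 n, wA α j
/-- π_n^β -/
def piB (α : ℕ → ℂ) (n : ℕ) : Polynomial ℂ := ∏ j ∈ Finset.Icc 1 n, wB α j
/-- π_n = π_n^γ -/
def piG (α : ℕ → ℂ) (c : ℕ → Bool) (n : ℕ) : Polynomial ℂ := ∏ j ∈ Finset.Icc 1 n, wG α c j

/-- 𝕒_n = {1 ≤ j ≤ n : γ_j = α_j} -/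
def aSet (c : ℕ → Bool) (n : ℕ) : Finset ℕ := (Finset.Icc 1 n).filter (fun j => c j = true)
/-- 𝕓_n = {1 ≤ j ≤ n : γ_j = β_j} -/
def bSet (c : ℕ → Bool) (n : ℕ) : Finset ℕ := (Finset.Icc 1 n).filter (fun j => c j = false)

/-- Blaschke factor ζ_j^α -/
def zetaA (α : ℕ → ℂ) (j : ℕ) (z : ℂ) : ℂ :=
  if α j = 0 then z else sig α j * (z - α j) / (1 - conj' (α j) * z)

/-- Blaschke factor ζ_j^β (β_j = 1/conj(α_j); ζ_j^β(z) = 1/z when β_j = ∞) -/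
def zetaB (α : ℕ → ℂ) (j : ℕ) (z : ℂ) : ℂ :=
  if α j = 0 then z⁻¹ else sig α j * (z - (conj' (α j))⁻¹) / (1 - z / α j)

/-- ζ_j = ζ_j^γ -/
def zetaG (α : ℕ → ℂ) (c : ℕ → Bool) (j : ℕ) (z : ℂ) : ℂ :=
  if c j then zetaA α j z else zetaB α j z

/-- B_n^α -/
def BA (α : ℕ → ℂ) (n : ℕ) (z : ℂ) : ℂ := ∏ j ∈ Finset.Icc 1 n, zetaA α j z
/-- B_n^β -/
def BB (α : ℕ → ℂ) (n : ℕ) (z : ℂ) : ℂ := ∏ j ∈ Finset.Icc 1 n, zetaB α j z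
/-- B̌_n^α = ∏_{j ∈ 𝕒_n} ζ_j -/
def BcA (α : ℕ → ℂ) (c : ℕ → Bool) (n : ℕ) (z : ℂ) : ℂ := ∏ j ∈ aSet c n, zetaG α c j z
/-- B̌_n^β = ∏_{j ∈ 𝕓_n} ζ_j -/
def BcB (α : ℕ → ℂ) (c : ℕ → Bool) (n : ℕ) (z : ℂ) : ℂ := ∏ j ∈ bSet c n, zetaG α c j z

/-- ζ̌_n^α (= ζ_n if γ_n = α_n, = 1 otherwise) -/
def zcA (α : ℕ → ℂ) (c : ℕ → Bool) (n : ℕ) (z : ℂ) : ℂ :=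
  if c n then zetaG α c n z else 1
/-- ζ̌_n^β (= ζ_n if γ_n = β_n, = 1 otherwise) -/
def zcB (α : ℕ → ℂ) (c : ℕ → Bool) (n : ℕ) (z : ℂ) : ℂ :=
  if c n then 1 else zetaG α c n z

/-- The space L_n^ν = {p/π_n^ν : deg p ≤ n}; a function `f` belongs to it if it agrees
with such a rational function on the unit circle (where all these objects live). -/
def Lsp (pip : ℕ → Polynomial ℂ) (n : ℕ) : Set (ℂ → ℂ) :=
  {f | ∃ p : Polynomial ℂ, p.natDegree ≤ n ∧ ∀ z, onT z → f z = p.eval z / (pip n).eval z}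

/-- L_{n*}^ν = {f_* : f ∈ L_n^ν} (again as functions on the unit circle, where
f_*(z) = conj(f(1/conj z)) = conj(f(z))) -/
def LstarSp (pip : ℕ → Polynomial ℂ) (n : ℕ) : Set (ℂ → ℂ) :=
  {f | ∃ p : Polynomial ℂ, p.natDegree ≤ n ∧ ∀ z, onT z → f z = conj' (p.eval z / (pip n).eval z)}

/-- R_n^ν = L_n^ν · L_{n*}^ν -/
def Rset (pip : ℕ → Polynomial ℂ) (n : ℕ) : Set (ℂ → ℂ) :=
  {h | ∃ g ∈ Lsp pip n, ∃ k ∈ LstarSp pip n, ∀ z, onT z → h z = g z * k z}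

/-- the substar conjugate f_*(z) = conj(f(1/conj z)) -/
def substar (f : ℂ → ℂ) : ℂ → ℂ := fun z => conj' (f ((conj' z)⁻¹))

/-- superstar conjugate q^*(z) = z^n conj(q(1/conj z)) of a polynomial of degree ≤ n -/
def pstar (n : ℕ) (q : Polynomial ℂ) : Polynomial ℂ :=
  ∑ k ∈ Finset.range (n + 1), Polynomial.C (conj' (q.coeff k)) * Polynomial.X ^ (n - k)

/-- the inner product ⟨f,g⟩ = ∫ conj(f) g dμ -/
def inn (μ : Measure ℂ) (f g : ℂ → ℂ) : ℂ := ∫ z, conj' (f z) * g z ∂μ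

/-- the reciprocal ORF φ_n^{ν*} = B_n^ν (φ_n^ν)_* (resp. φ_n^* = B̌_n^α B̌_n^β (φ_n)_*),
written out as the rational function ς_n p_n^{ν*}/π_n^ν -/
def starF (α : ℕ → ℂ) (pip : ℕ → Polynomial ℂ) (p : ℕ → Polynomial ℂ) (n : ℕ) (z : ℂ) : ℂ :=
  sigProd α n * (pstar n (p n)).eval z / (pip n).eval z

/-- `μ` is a probability measure on the unit circle 𝕋, positive a.e. on 𝕋 -/
structure CircleMeasure (μ : Measure ℂ) : Prop where
  prob : IsProbabilityMeasure μ
  circ : μ {z | ¬ onT z} = 0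
  pos : ∀ U : Set ℂ, IsOpen U → (U ∩ {z | onT z}).Nonempty → 0 < μ U

/-- `φ` (with numerators `p`) is the sequence of orthonormal rational functions for the
nested spaces `Lsp pip`: φ_0 = 1, φ_n = p_n/π_n ∈ L_n \ L_{n-1}, φ_n ⊥ L_{n-1}, ‖φ_n‖ = 1. -/
structure IsORF (μ : Measure ℂ) (pip : ℕ → Polynomial ℂ) (φ : ℕ → ℂ → ℂ)
    (p : ℕ → Polynomial ℂ) : Prop where
  rep : ∀ n z, φ n z = (p n).eval z / (pip n).eval z
  deg : ∀ n, (p n).natDegree ≤ n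
  p0 : p 0 = 1
  notmem : ∀ n, 1 ≤ n → φ n ∉ Lsp pip (n - 1)
  orth : ∀ n, 1 ≤ n → ∀ f ∈ Lsp pip (n - 1), inn μ (φ n) f = 0
  norm : ∀ n, inn μ (φ n) (φ n) = 1

/-- normalization φ_n^{α*}(α_n) > 0 -/
def normA (α : ℕ → ℂ) (p : ℕ → Polynomial ℂ) (n : ℕ) : Prop :=
  posR (sigProd α n * (pstar n (p n)).eval (α n) / (piA α n).eval (α n))

/-- normalization φ_n^{β*}(β_n) > 0 (when β_n = ∞ the value is the limit,
i.e. the ratio of the coefficients of z^n) -/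
def normB (α : ℕ → ℂ) (p : ℕ → Polynomial ℂ) (n : ℕ) : Prop :=
  if α n = 0 then posR (sigProd α n * (pstar n (p n)).coeff n / (piB α n).coeff n)
  else posR (sigProd α n * (pstar n (p n)).eval ((conj' (α n))⁻¹) /
    (piB α n).eval ((conj' (α n))⁻¹))

/-- π̌_n^α = ∏_{j∈𝕒_n} ϖ_j -/
def pidA (α : ℕ → ℂ) (c : ℕ → Bool) (n : ℕ) : Polynomial ℂ := ∏ j ∈ aSet c n, wA α j
/-- π̌_n^β = ∏_{j∈𝕓_n} ϖ_j -/
def pidB (α : ℕ → ℂ) (c : ℕ → Bool) (n : ℕ) : Polynomial ℂ := ∏ j ∈ bSet c n, wB α j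
/-- ∏_{j∈𝕓_n}(z − β_j), a factor being −1 when β_j = ∞ -/
def dB (α : ℕ → ℂ) (c : ℕ → Bool) (n : ℕ) : Polynomial ℂ :=
  ∏ j ∈ bSet c n,
    (if α j = 0 then (-1 : Polynomial ℂ) else Polynomial.X - Polynomial.C ((conj' (α j))⁻¹))
/-- ∏_{j∈𝕒_n}(z − α_j) -/
def dA (α : ℕ → ℂ) (c : ℕ → Bool) (n : ℕ) : Polynomial ℂ :=
  ∏ j ∈ aSet c n, (Polynomial.X - Polynomial.C (α j))

/-- ς̌_n^α = ∏_{j∈𝕒_n} σ_j -/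
def sigcA (α : ℕ → ℂ) (c : ℕ → Bool) (n : ℕ) : ℂ := ∏ j ∈ aSet c n, sig α j
/-- ς̌_n^β = ∏_{j∈𝕓_n} σ_j -/
def sigcB (α : ℕ → ℂ) (c : ℕ → Bool) (n : ℕ) : ℂ := ∏ j ∈ bSet c n, sig α j

/-- normalization for the γ-sequence: (φ_n^*/B̌_n^β)(α_n) > 0 when γ_n = α_n and
(φ_n^*/B̌_n^α)(β_n) > 0 when γ_n = β_n, written via the identities
φ_n^*/B̌_n^β = ς̌_n^α p_n^*/(π̌_n^α ∏_{j∈𝕓_n}(z−β_j)) and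
φ_n^*/B̌_n^α = ς̌_n^β p_n^*/(π̌_n^β ∏_{j∈𝕒_n}(z−α_j)) (the value at β_n = ∞ being the
limit, i.e. the ratio of the coefficients of z^n). -/
def normG (α : ℕ → ℂ) (c : ℕ → Bool) (p : ℕ → Polynomial ℂ) (n : ℕ) : Prop :=
  if c n then
    posR (sigcA α c n * (pstar n (p n)).eval (α n) /
      ((pidA α c n).eval (α n) * (dB α c n).eval (α n)))
  else if α n = 0 then
    posR (sigcB α c n * (pstar n (p n)).coeff n / ((pidB α c n) * dA α c n).coeff n)
  else
    posR (sigcB α c n * (pstar n (p n)).eval ((conj' (α n))⁻¹) /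
      ((pidB α c n) * dA α c n).eval ((conj' (α n))⁻¹))

/-- the reproducing kernel k_n(z,w) = Σ_{k=0}^n φ_k(z) conj(φ_k(w)) -/
def ker (φ : ℕ → ℂ → ℂ) (n : ℕ) (z w : ℂ) : ℂ :=
  ∑ k ∈ Finset.range (n + 1), φ k z * conj' (φ k w)

/-- evaluation of a polynomial of degree ≤ m at γ_j (its coefficient of z^m when γ_j = ∞) -/
def gEval (α : ℕ → ℂ) (c : ℕ → Bool) (m j : ℕ) (q : Polynomial ℂ) : ℂ :=
  if c j then q.eval (α j)
  else if α j = 0 then q.coeff m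
  else q.eval ((conj' (α j))⁻¹)

/-- evaluation of a polynomial of degree ≤ m at β_j (its coefficient of z^m when β_j = ∞) -/
def bEval (α : ℕ → ℂ) (m j : ℕ) (q : Polynomial ℂ) : ℂ :=
  if α j = 0 then q.coeff m else q.eval ((conj' (α j))⁻¹)

/-- η_n^α (the unimodular constant in the Szegő parameter λ_n^α) -/
def etaA (α : ℕ → ℂ) (p : ℕ → Polynomial ℂ) (n : ℕ) : ℂ :=
  conj' (sigProd α (n - 2)) * conj' ((pstar (n - 1) (p (n - 1))).eval (α (n - 1))) /
    ((pstar (n - 1) (p (n - 1))).eval (α (n - 1)))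

/-- the Szegő parameter λ_n^α -/
def lamA (α : ℕ → ℂ) (p : ℕ → Polynomial ℂ) (n : ℕ) : ℂ :=
  etaA α p n * (p n).eval (α (n - 1)) / conj' ((pstar n (p n)).eval (α (n - 1)))

/-- η_n^β -/
def etaB (α : ℕ → ℂ) (p : ℕ → Polynomial ℂ) (n : ℕ) : ℂ :=
  conj' (sigProd α (n - 2)) * conj' (bEval α (n - 1) (n - 1) (pstar (n - 1) (p (n - 1)))) /
    (bEval α (n - 1) (n - 1) (pstar (n - 1) (p (n - 1))))

/-- the Szegő parameter λ_n^β -/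
def lamB (α : ℕ → ℂ) (p : ℕ → Polynomial ℂ) (n : ℕ) : ℂ :=
  etaB α p n * bEval α n (n - 1) (p n) / conj' (bEval α n (n - 1) (pstar n (p n)))

/-- η_n = η_n^γ -/
def etaG (α : ℕ → ℂ) (c : ℕ → Bool) (p : ℕ → Polynomial ℂ) (n : ℕ) : ℂ :=
  conj' (sigProd α (n - 2)) * conj' (gEval α c (n - 1) (n - 1) (pstar (n - 1) (p (n - 1)))) /
    (gEval α c (n - 1) (n - 1) (pstar (n - 1) (p (n - 1))))

/-- the Szegő parameter λ_n = λ_n^γ -/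
def lamG (α : ℕ → ℂ) (c : ℕ → Bool) (p : ℕ → Polynomial ℂ) (n : ℕ) : ℂ :=
  etaG α c p n * gEval α c n (n - 1) (p n) / conj' (gEval α c n (n - 1) (pstar n (p n)))

/-- functions of the second kind: ψ(z) = ∫ E(t,z) φ(t) − D(t,z) φ(z) dμ(t) -/
def psi (μ : Measure ℂ) (φ : ℂ → ℂ) (z : ℂ) : ℂ :=
  ∫ t, (2 * t / (t - z)) * φ t - ((t + z) / (t - z)) * φ z ∂μ

/-- ∏_{j=k+1}^n ϖ_j -/
def tailProd (α : ℕ → ℂ) (c : ℕ → Bool) (n k : ℕ) : Polynomial ℂ :=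
  ∏ j ∈ Finset.Icc (k + 1) n, wG α c j

/-- the numerator C_n(z,w) of the kernel k_n = C_n/(π_n(z) conj(π_n(w))), as a polynomial
in w after conjugation: C_n(z,w) = conj((CnPoly n z).eval w) -/
def CnPoly (α : ℕ → ℂ) (c : ℕ → Bool) (p : ℕ → Polynomial ℂ) (n : ℕ) (z : ℂ) : Polynomial ℂ :=
  ∑ k ∈ Finset.range (n + 1),
    Polynomial.C (conj' ((p k).eval z * (tailProd α c n k).eval z)) * ((p k) * tailProd α c n k)

/-- z ↦ C_n(z,∞) (the coefficient of w^n of w ↦ C_n(z,w)), as a polynomial in z -/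
def CnInf (α : ℕ → ℂ) (c : ℕ → Bool) (p : ℕ → Polynomial ℂ) (n : ℕ) : Polynomial ℂ :=
  ∑ k ∈ Finset.range (n + 1),
    ((p k) * tailProd α c n k) * Polynomial.C (conj' (((p k) * tailProd α c n k).coeff n))

/-- ϖ_n^*(z) = z − γ_n (= −1 when γ_n = ∞) -/
def wstarG (α : ℕ → ℂ) (c : ℕ → Bool) (n : ℕ) : Polynomial ℂ :=
  if c n then Polynomial.X - Polynomial.C (α n)
  else if α n = 0 then -1
  else Polynomial.X - Polynomial.C ((conj' (α n))⁻¹)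

end ORF

open ORF MeasureTheory

/-!
The numerator `q = pₙ + τ ςₙ pₙ^*` is self-inversive, `q^* = conj (τ ςₙ) q`, so its zeros are
symmetric under `ξ ↦ 1 / conj ξ`. Hence a zero off the circle, or a double zero on it, yields a
factorisation `q = (X - ξ)(1 - conj ξ X) h` with `deg h ≤ n - 2`. Put `g = ϖₙ ϖₙ^* h`: both `g`
and `g^*` are `ϖₙ` times a polynomial of degree `≤ n - 1`, so `g / πₙ` is orthogonal to `φₙ`
and, via `⟨φₙ^*, g / πₙ⟩ = conj ⟨φₙ, g^* / πₙ⟩`, to `φₙ^*`, hence to `q / πₙ`. On the circle,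
however, `conj q · g / |πₙ|²` is the square `|(1 - conj ξ z) h ϖₙ / πₙ|²`, which forces `h = 0`.
Finally `q ≠ 0`, because `L_n = ϖₙ L_{n-1} + ϖₙ^* L_{n-1}` would otherwise make `φₙ`
orthogonal to itself.
-/

open Polynomial Metric

namespace ORF

lemma conj'_mul_self_eq_one_iff {z : ℂ} : conj' z * z = 1 ↔ ‖z‖ = 1 := by
  rw [conj', Complex.conj_mul', ← pow_eq_one_iff_of_nonneg (norm_nonneg z) two_ne_zero]
  norm_cast

section Reflection

lemma coeff_pstar (n : ℕ) (q : ℂ[X]) (j : ℕ) :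
    (pstar n q).coeff j = if j ≤ n then conj' (q.coeff (n - j)) else 0 := by
  simp only [pstar, finsetSum_coeff, coeff_C_mul, coeff_X_pow]
  split_ifs with hj
  · rw [Finset.sum_eq_single (n - j)]
    · simp [Nat.sub_sub_self hj]
    · intro k hk hkj
      rw [if_neg (by simp at hk; omega), mul_zero]
    · simp
  · exact Finset.sum_eq_zero fun k hk => by rw [if_neg (by simp at hk; omega), mul_zero]

lemma natDegree_pstar_le (n : ℕ) (q : ℂ[X]) : (pstar n q).natDegree ≤ n :=
  natDegree_le_iff_coeff_eq_zero.2 fun j hj => by rw [coeff_pstar, if_neg (by omega)]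

lemma pstar_add (n : ℕ) (f g : ℂ[X]) : pstar n (f + g) = pstar n f + pstar n g := by
  ext j
  simp only [coeff_pstar, coeff_add]
  split_ifs <;> simp [conj']

lemma pstar_C_mul (n : ℕ) (a : ℂ) (g : ℂ[X]) : pstar n (C a * g) = C (conj' a) * pstar n g := by
  ext j
  simp only [coeff_pstar, coeff_C_mul]
  split_ifs <;> simp [conj']

lemma pstar_pstar {n : ℕ} {q : ℂ[X]} (hq : q.natDegree ≤ n) : pstar n (pstar n q) = q := by
  ext j
  rw [coeff_pstar]
  split_ifs with hj
  · rw [coeff_pstar, if_pos (Nat.sub_le n j), Nat.sub_sub_self hj]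
    simp [conj']
  · exact (coeff_eq_zero_of_natDegree_lt (by omega)).symm

lemma pstar_one (a : ℂ[X]) : pstar 1 a = C (conj' (a.coeff 0)) * X + C (conj' (a.coeff 1)) := by
  simp [pstar, Finset.sum_range_succ]

lemma eval_pstar {n : ℕ} {q : ℂ[X]} (hq : q.natDegree ≤ n) {z : ℂ} (hz : z ≠ 0) :
    (pstar n q).eval z = z ^ n * conj' (q.eval (conj' z)⁻¹) := by
  rw [pstar, eval_finsetSum, eval_eq_sum_range' (Nat.lt_succ_of_le hq), conj', map_sum,
    Finset.mul_sum]
  refine Finset.sum_congr rfl fun k hk => ?_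
  simp only [eval_mul, eval_C, eval_pow, eval_X, map_mul, map_pow, map_inv₀, Complex.conj_conj,
    conj']
  rw [pow_sub₀ z hz (by simpa [Nat.lt_succ_iff] using hk), inv_pow]
  ring

lemma eval_pstar_of_norm_eq_one {n : ℕ} {q : ℂ[X]} (hq : q.natDegree ≤ n) {z : ℂ}
    (hz : ‖z‖ = 1) : (pstar n q).eval z = z ^ n * conj' (q.eval z) := by
  have hz0 : z ≠ 0 := by rintro rfl; simp at hz
  rw [eval_pstar hq hz0, ← inv_eq_of_mul_eq_one_left (conj'_mul_self_eq_one_iff.2 hz), inv_inv]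

lemma pstar_mul {m₁ m₂ : ℕ} {f g : ℂ[X]} (hf : f.natDegree ≤ m₁) (hg : g.natDegree ≤ m₂) :
    pstar (m₁ + m₂) (f * g) = pstar m₁ f * pstar m₂ g := by
  refine eq_of_infinite_eval_eq _ _ (Set.infinite_of_finite_compl (s := {0}ᶜ) (by simp) |>.mono ?_)
  intro z (hz : z ≠ 0)
  show eval z _ = eval z _
  rw [eval_mul, eval_pstar (natDegree_mul_le.trans (add_le_add hf hg)) hz, eval_pstar hf hz,
    eval_pstar hg hz, eval_mul, conj', map_mul, pow_add]
  simp only [conj']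
  ring

lemma pstar_one_X_sub_C (ξ : ℂ) : pstar 1 (X - C ξ) = 1 - C (conj' ξ) * X := by
  rw [pstar_one]
  simp [coeff_X, coeff_C, conj']
  ring

end Reflection

section DegreeOne

variable {a : ℂ[X]}

lemma eval_ne_zero_of_norm_coeff_ne (ha : a.natDegree ≤ 1) (hcoeff : ‖a.coeff 0‖ ≠ ‖a.coeff 1‖)
    {z : ℂ} (hz : ‖z‖ = 1) : a.eval z ≠ 0 := by
  rw [eq_X_add_C_of_natDegree_le_one ha]
  simp only [eval_add, eval_mul, eval_C, eval_X]
  intro h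
  apply hcoeff
  rw [eq_neg_of_add_eq_zero_right h, norm_neg, norm_mul, hz, mul_one]

/-- When `|a₀| ≠ |a₁|`, the polynomials `a` and `a^*` span `ℂ[X]_{≤1}`, since
`conj a₀ · a - a₁ · a^* = |a₀|² - |a₁|²` and `-conj a₁ · a + a₀ · a^* = (|a₀|² - |a₁|²) X`. -/
lemma exists_eq_mul_add_pstar_one_mul (ha : a.natDegree ≤ 1)
    (hcoeff : ‖a.coeff 0‖ ≠ ‖a.coeff 1‖) {n : ℕ} (hn : 1 ≤ n) {f : ℂ[X]}
    (hf : f.natDegree ≤ n) :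
    ∃ r s : ℂ[X], r.natDegree ≤ n - 1 ∧ s.natDegree ≤ n - 1 ∧ f = a * r + pstar 1 a * s := by
  set a₀ := a.coeff 0
  set a₁ := a.coeff 1
  set D : ℂ := conj' a₀ * a₀ - conj' a₁ * a₁
  have hD : D ≠ 0 := by
    simp only [D, conj', Complex.conj_mul', sub_ne_zero]
    exact_mod_cast fun h => hcoeff ((pow_left_inj₀ (norm_nonneg _) (norm_nonneg _) two_ne_zero).1 h)
  have ha' : a = C a₁ * X + C a₀ := eq_X_add_C_of_natDegree_le_one ha
  have hsa : pstar 1 a = C (conj' a₀) * X + C (conj' a₁) := pstar_one a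
  have h1 : C D = C (conj' a₀) * a - C a₁ * pstar 1 a := by
    rw [hsa, ha']; simp only [D, C_sub, C_mul]; ring
  have hX : C D * X = C (-conj' a₁) * a + C a₀ * pstar 1 a := by
    rw [hsa, ha']; simp only [D, C_sub, C_mul, C_neg]; ring
  have hDinv : C D⁻¹ * C D = 1 := by rw [← C_mul, inv_mul_cancel₀ hD, C_1]
  have hdivX : f.divX.natDegree ≤ n - 1 := by
    rw [natDegree_divX_eq_natDegree_tsub_one]; omega
  refine ⟨C D⁻¹ * (C (-conj' a₁) * f.divX + C (conj' a₀) * C (f.coeff 0)),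
    C D⁻¹ * (C a₀ * f.divX - C a₁ * C (f.coeff 0)), ?_, ?_, ?_⟩
  · refine (natDegree_C_mul_le _ _).trans (natDegree_add_le_of_degree_le ?_ ?_) <;>
      [exact (natDegree_C_mul_le _ _).trans hdivX; (rw [← C_mul, natDegree_C]; omega)]
  · refine (natDegree_C_mul_le _ _).trans ((natDegree_sub_le _ _).trans (max_le ?_ ?_)) <;>
      [exact (natDegree_C_mul_le _ _).trans hdivX; (rw [← C_mul, natDegree_C]; omega)]
  · linear_combination (X_mul_divX_add f).symm - (X * f.divX + C (f.coeff 0)) * hDinv +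
      C D⁻¹ * f.divX * hX + C D⁻¹ * C (f.coeff 0) * h1

end DegreeOne

section Factors

variable {α : ℕ → ℂ} {c : ℕ → Bool}

lemma natDegree_wG_le (j : ℕ) : (wG α c j).natDegree ≤ 1 := by
  unfold wG wA wB
  split_ifs <;> first
    | simp
    | exact (natDegree_sub_le _ _).trans
        (max_le (by simp) ((natDegree_C_mul_le _ _).trans (by simp)))

lemma norm_coeff_zero_wG_ne (hα : ∀ j, ‖α j‖ < 1) (j : ℕ) :
    ‖(wG α c j).coeff 0‖ ≠ ‖(wG α c j).coeff 1‖ := by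
  have hαj := hα j
  unfold wG wA wB
  split_ifs with hc h0
  · simpa [coeff_one, conj'] using hαj.ne'
  · simp
  · simpa [coeff_one, norm_inv] using hαj.ne

lemma wG_eval_ne_zero (hα : ∀ j, ‖α j‖ < 1) {z : ℂ} (hz : ‖z‖ = 1) (j : ℕ) :
    (wG α c j).eval z ≠ 0 :=
  eval_ne_zero_of_norm_coeff_ne (natDegree_wG_le j) (norm_coeff_zero_wG_ne hα j) hz

lemma piG_eval_ne_zero (hα : ∀ j, ‖α j‖ < 1) {z : ℂ} (hz : ‖z‖ = 1) (n : ℕ) :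
    (piG α c n).eval z ≠ 0 := by
  rw [piG, eval_prod]
  exact Finset.prod_ne_zero_iff.2 fun j _ => wG_eval_ne_zero hα hz j

lemma piG_eval_ne_zero_on_sphere (hα : ∀ j, ‖α j‖ < 1) (n : ℕ) :
    ∀ z ∈ sphere (0 : ℂ) 1, (piG α c n).eval z ≠ 0 :=
  fun _ hz => piG_eval_ne_zero hα (mem_sphere_zero_iff_norm.1 hz) n

lemma norm_sigProd (n : ℕ) : ‖sigProd α n‖ = 1 := by
  rw [sigProd, norm_prod]
  refine Finset.prod_eq_one fun j _ => ?_
  unfold sig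
  split_ifs with h
  · simp
  · rw [norm_div, conj', Complex.norm_conj, Complex.norm_real, norm_norm,
      div_self (norm_ne_zero_iff.2 h)]

lemma piG_eq_mul_wG {n : ℕ} (hn : 1 ≤ n) : piG α c n = piG α c (n - 1) * wG α c n := by
  obtain ⟨m, rfl⟩ := Nat.exists_eq_add_of_le' hn
  simp [piG, Finset.prod_Icc_succ_top]

end Factors

lemma sphere_zero_one_infinite : (sphere (0 : ℂ) 1).Infinite :=
  (isPreconnected_sphere (by simp [Complex.rank_real_complex]) 0 1).infinite_of_nontrivial
    ⟨1, by simp, -1, by simp, by norm_num⟩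

lemma eq_zero_of_eval_eq_zero_on_sphere {f : ℂ[X]} (hf : ∀ z ∈ sphere (0 : ℂ) 1, f.eval z = 0) :
    f = 0 :=
  f.eq_zero_of_infinite_isRoot (sphere_zero_one_infinite.mono hf)

namespace CircleMeasure

variable {μ : Measure ℂ}

lemma ae_mem_sphere (hμ : CircleMeasure μ) : ∀ᵐ z ∂μ, z ∈ sphere (0 : ℂ) 1 := by
  rw [ae_iff]
  simpa [onT] using hμ.circ

lemma integrable_of_continuousOn (hμ : CircleMeasure μ) {E : Type*} [NormedAddCommGroup E]
    {f : ℂ → E} (hf : ContinuousOn f (sphere 0 1)) : Integrable f μ := by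
  have := hμ.prob
  rw [← Measure.restrict_eq_self_of_ae_mem hμ.ae_mem_sphere]
  exact hf.integrableOn_compact (isCompact_sphere 0 1)

/-- `μ` charges every relatively open subset of the circle. -/
lemma eqOn_zero_of_integral_eq_zero (hμ : CircleMeasure μ) {f : ℂ → ℝ}
    (hf : ContinuousOn f (sphere 0 1)) (hf0 : ∀ z, 0 ≤ f z) (hint : ∫ z, f z ∂μ = 0) :
    Set.EqOn f 0 (sphere 0 1) := by
  intro z₀ hz₀
  by_contra hne
  have hpos : 0 < f z₀ := (hf0 z₀).lt_of_ne (Ne.symm hne)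
  obtain ⟨U, hUopen, hz₀U, hU⟩ :=
    mem_nhdsWithin.1 ((hf z₀ hz₀).eventually (lt_mem_nhds hpos))
  have hUsupp : U ≤ᵐ[μ] Function.support f := by
    filter_upwards [hμ.ae_mem_sphere] with z hz hzU
    exact (hU ⟨hzU, hz⟩).ne'
  have hμU : 0 < μ U := hμ.pos U hUopen ⟨z₀, hz₀U, mem_sphere_zero_iff_norm.1 hz₀⟩
  have := (integral_pos_iff_support_of_nonneg_ae (Filter.Eventually.of_forall hf0)
    (hμ.integrable_of_continuousOn hf)).2 (hμU.trans_le (measure_mono_ae hUsupp))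
  exact this.ne' hint

end CircleMeasure

section WeightedInner

def weightedInner (μ : Measure ℂ) (d f g : ℂ[X]) : ℂ :=
  ∫ z, conj' (f.eval z) * g.eval z / (conj' (d.eval z) * d.eval z) ∂μ

variable {μ : Measure ℂ} {d : ℂ[X]}

lemma integrable_weightedInner (hμ : CircleMeasure μ) (hd : ∀ z ∈ sphere (0 : ℂ) 1, d.eval z ≠ 0)
    (f g : ℂ[X]) :
    Integrable (fun z => conj' (f.eval z) * g.eval z / (conj' (d.eval z) * d.eval z)) μ := by
  refine hμ.integrable_of_continuousOn (ContinuousOn.div ?_ ?_ fun z hz => ?_)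
  · exact (Complex.continuous_conj.comp f.continuous |>.mul g.continuous).continuousOn
  · exact (Complex.continuous_conj.comp d.continuous |>.mul d.continuous).continuousOn
  · exact mul_ne_zero (by simpa [conj'] using hd z hz) (hd z hz)

lemma weightedInner_add_left (hμ : CircleMeasure μ) (hd : ∀ z ∈ sphere (0 : ℂ) 1, d.eval z ≠ 0)
    (f₁ f₂ g : ℂ[X]) :
    weightedInner μ d (f₁ + f₂) g = weightedInner μ d f₁ g + weightedInner μ d f₂ g := by
  rw [weightedInner, weightedInner, weightedInner, ← integral_add
    (integrable_weightedInner hμ hd f₁ g) (integrable_weightedInner hμ hd f₂ g)]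
  congr 1 with z
  simp only [eval_add, conj', map_add]
  ring

lemma weightedInner_add_right (hμ : CircleMeasure μ) (hd : ∀ z ∈ sphere (0 : ℂ) 1, d.eval z ≠ 0)
    (f g₁ g₂ : ℂ[X]) :
    weightedInner μ d f (g₁ + g₂) = weightedInner μ d f g₁ + weightedInner μ d f g₂ := by
  rw [weightedInner, weightedInner, weightedInner, ← integral_add
    (integrable_weightedInner hμ hd f g₁) (integrable_weightedInner hμ hd f g₂)]
  congr 1 with z
  simp only [eval_add]
  ring

lemma weightedInner_C_mul_left (a : ℂ) (f g : ℂ[X]) :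
    weightedInner μ d (C a * f) g = conj' a * weightedInner μ d f g := by
  rw [weightedInner, weightedInner, ← integral_const_mul]
  congr 1 with z
  simp only [eval_mul, eval_C, conj', map_mul]
  ring

lemma weightedInner_pstar_left (hμ : CircleMeasure μ) {n : ℕ} {f g : ℂ[X]}
    (hf : f.natDegree ≤ n) (hg : g.natDegree ≤ n) :
    weightedInner μ d (pstar n f) g = conj' (weightedInner μ d f (pstar n g)) := by
  rw [weightedInner, weightedInner, conj', ← integral_conj]
  refine integral_congr_ae ?_
  filter_upwards [hμ.ae_mem_sphere] with z hz
  rw [mem_sphere_zero_iff_norm] at hz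
  rw [eval_pstar_of_norm_eq_one hf hz, eval_pstar_of_norm_eq_one hg hz]
  simp only [conj', map_mul, map_div₀, map_pow, Complex.conj_conj]
  ring

end WeightedInner

section Orthogonality

variable {α : ℕ → ℂ} {c : ℕ → Bool} {μ : Measure ℂ} {φ : ℕ → ℂ → ℂ} {p : ℕ → ℂ[X]}

lemma weightedInner_self (hφ : IsORF μ (piG α c) φ p) (n : ℕ) :
    weightedInner μ (piG α c n) (p n) (p n) = 1 := by
  rw [← hφ.norm n, inn, weightedInner]
  congr 1 with z
  simp only [hφ.rep, conj', map_div₀, div_mul_div_comm]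

lemma weightedInner_wG_mul_eq_zero (hα : ∀ j, ‖α j‖ < 1) (hμ : CircleMeasure μ)
    (hφ : IsORF μ (piG α c) φ p) {n : ℕ} (hn : 1 ≤ n) {r : ℂ[X]} (hr : r.natDegree ≤ n - 1) :
    weightedInner μ (piG α c n) (p n) (wG α c n * r) = 0 := by
  rw [← hφ.orth n hn _ ⟨r, hr, fun z _ => rfl⟩, inn, weightedInner]
  refine integral_congr_ae ?_
  filter_upwards [hμ.ae_mem_sphere] with z hz
  rw [mem_sphere_zero_iff_norm] at hz
  have hπ := piG_eval_ne_zero (c := c) hα hz (n - 1)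
  have hw := wG_eval_ne_zero (c := c) hα hz n
  simp only [hφ.rep, piG_eq_mul_wG hn, eval_mul, conj', map_div₀, map_mul]
  field_simp

lemma weightedInner_pstar_pstar_one_wG_mul_eq_zero (hα : ∀ j, ‖α j‖ < 1)
    (hμ : CircleMeasure μ) (hφ : IsORF μ (piG α c) φ p) {n : ℕ} (hn : 1 ≤ n) {s : ℂ[X]}
    (hs : s.natDegree ≤ n - 1) :
    weightedInner μ (piG α c n) (pstar n (p n)) (pstar 1 (wG α c n) * s) = 0 := by
  have hstar : pstar n (pstar 1 (wG α c n) * s) = wG α c n * pstar (n - 1) s := by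
    have h := pstar_mul (natDegree_pstar_le 1 (wG α c n)) hs
    rwa [Nat.add_sub_cancel' hn, pstar_pstar (natDegree_wG_le n)] at h
  rw [weightedInner_pstar_left hμ (hφ.deg n) (natDegree_mul_le.trans (by
      have := natDegree_pstar_le 1 (wG α c n); omega)), hstar,
    weightedInner_wG_mul_eq_zero hα hμ hφ hn (natDegree_pstar_le _ _)]
  simp [conj']

end Orthogonality

/-- On the circle `conj (z - ξ) = z⁻¹ (1 - conj ξ z)` and `a^*(z) = z conj (a z)`. -/
lemma conj_eval_mul_eval_div_eq_norm_sq {z : ℂ} (hz : ‖z‖ = 1) {a : ℂ[X]} (ha : a.natDegree ≤ 1)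
    (ξ : ℂ) (h d : ℂ[X]) :
    conj' (((X - C ξ) * ((1 - C (conj' ξ) * X) * h)).eval z) * (a * (pstar 1 a * h)).eval z /
        (conj' (d.eval z) * d.eval z) =
      ((‖(1 - conj' ξ * z) * h.eval z * a.eval z / d.eval z‖ ^ 2 : ℝ) : ℂ) := by
  have hz0 : z ≠ 0 := by rintro rfl; simp at hz
  have hzc : conj' z = z⁻¹ := (inv_eq_of_mul_eq_one_left (conj'_mul_self_eq_one_iff.2 hz)).symm
  rw [Complex.ofReal_pow, ← Complex.conj_mul']
  simp only [eval_mul, eval_sub, eval_one, eval_C, eval_X, eval_pstar_of_norm_eq_one ha hz, pow_one]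
  simp only [conj', map_mul, map_sub, map_div₀, map_one, Complex.conj_conj] at hzc ⊢
  rw [hzc]
  field_simp

section ParaOrthogonal

variable {α : ℕ → ℂ} {c : ℕ → Bool} {μ : Measure ℂ} {φ : ℕ → ℂ → ℂ} {p : ℕ → ℂ[X]}

lemma natDegree_paraOrth_le (hφ : IsORF μ (piG α c) φ p) (n : ℕ) (w : ℂ) :
    (p n + C w * pstar n (p n)).natDegree ≤ n :=
  natDegree_add_le_of_degree_le (hφ.deg n) ((natDegree_C_mul_le _ _).trans (natDegree_pstar_le _ _))

lemma pstar_paraOrth (hφ : IsORF μ (piG α c) φ p) (n : ℕ) {w : ℂ} (hw : ‖w‖ = 1) :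
    pstar n (p n + C w * pstar n (p n)) = C (conj' w) * (p n + C w * pstar n (p n)) := by
  rw [pstar_add, pstar_C_mul, pstar_pstar (hφ.deg n), mul_add, ← mul_assoc, ← C_mul,
    conj'_mul_self_eq_one_iff.2 hw, C_1, one_mul, add_comm]

lemma paraOrth_ne_zero (hα : ∀ j, ‖α j‖ < 1) (hμ : CircleMeasure μ) (hφ : IsORF μ (piG α c) φ p)
    {n : ℕ} (hn : 1 ≤ n) (w : ℂ) : p n + C w * pstar n (p n) ≠ 0 := by
  intro hq
  have hp : p n = C (-w) * pstar n (p n) := by rw [C_neg, neg_mul]; linear_combination hq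
  have hd := piG_eval_ne_zero_on_sphere (c := c) hα n
  obtain ⟨r, s, hr, hs, hrs⟩ := exists_eq_mul_add_pstar_one_mul (natDegree_wG_le n)
    (norm_coeff_zero_wG_ne (c := c) hα n) hn (hφ.deg n)
  have h0 : weightedInner μ (piG α c n) (p n) (wG α c n * r + pstar 1 (wG α c n) * s) = 0 := by
    rw [weightedInner_add_right hμ hd, weightedInner_wG_mul_eq_zero hα hμ hφ hn hr, hp,
      weightedInner_C_mul_left, weightedInner_pstar_pstar_one_wG_mul_eq_zero hα hμ hφ hn hs]
    simp
  rw [← hrs, weightedInner_self hφ] at h0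
  exact one_ne_zero h0

lemma weightedInner_paraOrth_eq_zero (hα : ∀ j, ‖α j‖ < 1) (hμ : CircleMeasure μ)
    (hφ : IsORF μ (piG α c) φ p) {n : ℕ} (w : ℂ) {u : ℂ[X]} (hu : u.natDegree + 2 ≤ n) :
    weightedInner μ (piG α c n) (p n + C w * pstar n (p n))
      (wG α c n * (pstar 1 (wG α c n) * u)) = 0 := by
  have hn : 1 ≤ n := by omega
  have hd := piG_eval_ne_zero_on_sphere (c := c) hα n
  have hdeg {a : ℂ[X]} (ha : a.natDegree ≤ 1) : (a * u).natDegree ≤ n - 1 :=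
    natDegree_mul_le.trans (by omega)
  rw [weightedInner_add_left hμ hd, weightedInner_C_mul_left,
    weightedInner_wG_mul_eq_zero hα hμ hφ hn (hdeg (natDegree_pstar_le 1 _)),
    mul_left_comm, weightedInner_pstar_pstar_one_wG_mul_eq_zero hα hμ hφ hn
      (hdeg (natDegree_wG_le n))]
  simp

lemma paraOrth_ne_factor (hα : ∀ j, ‖α j‖ < 1) (hμ : CircleMeasure μ)
    (hφ : IsORF μ (piG α c) φ p) {n : ℕ} (w ξ : ℂ) {h : ℂ[X]} (hh : h.natDegree + 2 ≤ n) :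
    p n + C w * pstar n (p n) ≠ (X - C ξ) * ((1 - C (conj' ξ) * X) * h) := by
  intro hfac
  set R : ℂ → ℂ := fun z => (1 - conj' ξ * z) * h.eval z * (wG α c n).eval z / (piG α c n).eval z
  have hd := piG_eval_ne_zero_on_sphere (c := c) hα n
  have hRcont : ContinuousOn (fun z => ‖R z‖ ^ 2) (sphere 0 1) :=
    ((((continuous_const.sub (continuous_const.mul continuous_id)).mul h.continuous).mul
      (wG α c n).continuous).continuousOn.div (piG α c n).continuousOn hd).norm.pow 2
  have hint : ∫ z, ‖R z‖ ^ 2 ∂μ = 0 := by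
    have h0 := weightedInner_paraOrth_eq_zero hα hμ hφ w hh
    rw [hfac, weightedInner] at h0
    rw [← Complex.ofReal_inj, ← integral_complex_ofReal, Complex.ofReal_zero, ← h0]
    refine integral_congr_ae ?_
    filter_upwards [hμ.ae_mem_sphere] with z hz
    exact (conj_eval_mul_eval_div_eq_norm_sq (mem_sphere_zero_iff_norm.1 hz)
      (natDegree_wG_le n) ξ h _).symm
  have hR := hμ.eqOn_zero_of_integral_eq_zero hRcont (fun z => by positivity) hint
  have hprod : (1 - C (conj' ξ) * X) * h = 0 := eq_zero_of_eval_eq_zero_on_sphere fun z hz => by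
    have hw := wG_eval_ne_zero (c := c) hα (mem_sphere_zero_iff_norm.1 hz) n
    simpa [R, hd z hz, hw] using hR hz
  have h1 : (1 - C (conj' ξ) * X : ℂ[X]) ≠ 0 := fun h1 => by simpa using congrArg (eval 0) h1
  rw [(mul_eq_zero.1 hprod).resolve_left h1, mul_zero, mul_zero] at hfac
  exact paraOrth_ne_zero hα hμ hφ (by omega) w hfac

end ParaOrthogonal

section SelfInversive

lemma X_sub_C_eq_one_sub_C_mul_X_mul_C {ξ t : ℂ} (h : conj' ξ * t = 1) :
    X - C t = (1 - C (conj' ξ) * X) * C (-t) := by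
  have h' : C (conj' ξ) * C t = 1 := by rw [← C_mul, h, C_1]
  rw [C_neg]
  linear_combination (-X) * h'

lemma pstar_X_sub_C_mul {N : ℕ} {g : ℂ[X]} (hg : g.natDegree ≤ N) (ξ : ℂ) :
    pstar (N + 1) ((X - C ξ) * g) = (1 - C (conj' ξ) * X) * pstar N g := by
  rw [add_comm, pstar_mul (natDegree_X_sub_C_le ξ) hg, pstar_one_X_sub_C]

variable {N : ℕ} {q : ℂ[X]}

/-- A zero `ξ` of a self-inversive `q` comes with the zero `1 / conj ξ`; off the circle the
two are distinct (for `ξ = 0` the partner sits at `∞`, i.e. the degree drops). -/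
lemma exists_factor_of_isRoot_of_norm_ne_one (hq0 : q ≠ 0) (hdeg : q.natDegree ≤ N) {u : ℂ}
    (hu : u ≠ 0) (hsi : pstar N q = C u * q) {ξ : ℂ} (hroot : q.IsRoot ξ) (hξ : ‖ξ‖ ≠ 1) :
    ∃ h : ℂ[X], h.natDegree + 2 ≤ N ∧ q = (X - C ξ) * ((1 - C (conj' ξ) * X) * h) := by
  set g := q /ₘ (X - C ξ)
  have hg : (X - C ξ) * g = q := mul_divByMonic_eq_iff_isRoot.2 hroot
  have hg0 : g ≠ 0 := by rintro h; rw [h, mul_zero] at hg; exact hq0 hg.symm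
  have hdegq : q.natDegree = g.natDegree + 1 := by
    rw [← hg, natDegree_mul (X_sub_C_ne_zero ξ) hg0, natDegree_X_sub_C, add_comm]
  obtain ⟨M, rfl⟩ : ∃ M, N = M + 1 := ⟨N - 1, by omega⟩
  have hsi' : (1 - C (conj' ξ) * X) * pstar M g = C u * ((X - C ξ) * g) := by
    rw [← pstar_X_sub_C_mul (by omega) ξ, hg, hsi]
  by_cases hξ0 : ξ = 0
  · subst hξ0
    simp only [conj', map_zero, zero_mul, sub_zero, one_mul] at hsi' hg ⊢
    refine ⟨g, ?_, hg.symm⟩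
    have := natDegree_pstar_le M g
    rw [hsi', natDegree_C_mul hu, natDegree_mul X_ne_zero hg0, natDegree_X] at this
    omega
  · set t := (conj' ξ)⁻¹
    have hut : conj' ξ * t = 1 := mul_inv_cancel₀ (by simpa [conj'] using hξ0)
    have htξ : t - ξ ≠ 0 := fun h => hξ (conj'_mul_self_eq_one_iff.1 (sub_eq_zero.1 h ▸ hut))
    have hgt : g.IsRoot t := by
      have := congrArg (eval t) hsi'
      simp only [eval_mul, eval_sub, eval_one, eval_C, eval_X, hut, sub_self, zero_mul] at this
      exact (mul_eq_zero.1 ((mul_eq_zero.1 this.symm).resolve_left hu)).resolve_left htξ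
    set k := g /ₘ (X - C t)
    have hk : (X - C t) * k = g := mul_divByMonic_eq_iff_isRoot.2 hgt
    have hk0 : k ≠ 0 := by rintro h; rw [h, mul_zero] at hk; exact hg0 hk.symm
    refine ⟨C (-t) * k, ?_, ?_⟩
    · have := natDegree_C_mul_le (-t) k
      rw [← hk, natDegree_mul (X_sub_C_ne_zero t) hk0, natDegree_X_sub_C] at hdegq
      omega
    · rw [← hg, ← hk, X_sub_C_eq_one_sub_C_mul_X_mul_C hut]
      ring

/-- On the circle `X - ξ` and `1 - conj ξ X` are associated. -/
lemma exists_factor_of_sq_dvd (hq0 : q ≠ 0) (hdeg : q.natDegree ≤ N) {ξ : ℂ} (hξ : ‖ξ‖ = 1)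
    (hdvd : (X - C ξ) ^ 2 ∣ q) :
    ∃ h : ℂ[X], h.natDegree + 2 ≤ N ∧ q = (X - C ξ) * ((1 - C (conj' ξ) * X) * h) := by
  obtain ⟨k, rfl⟩ := hdvd
  have hk0 : k ≠ 0 := by rintro rfl; simp at hq0
  refine ⟨C (-ξ) * k, ?_, ?_⟩
  · have := natDegree_C_mul_le (-ξ) k
    rw [natDegree_mul (pow_ne_zero 2 (X_sub_C_ne_zero ξ)) hk0, natDegree_pow,
      natDegree_X_sub_C] at hdeg
    omega
  · rw [sq, mul_assoc]
    congr 1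
    rw [X_sub_C_eq_one_sub_C_mul_X_mul_C (conj'_mul_self_eq_one_iff.2 hξ)]
    ring

lemma nodup_roots_of_forall_not_sq_dvd {K : Type*} [Field K] {f : K[X]}
    (hf : ∀ a, ¬ (X - C a) ^ 2 ∣ f) : f.roots.Nodup := by
  rcases eq_or_ne f 0 with rfl | hf0
  · simp
  classical
  refine Multiset.nodup_iff_count_le_one.2 fun a => ?_
  rw [count_roots]
  by_contra! h
  exact hf a ((le_rootMultiplicity_iff hf0).1 h)

theorem roots_of_pstar_eq_C_mul (hq0 : q ≠ 0) (hdeg : q.natDegree ≤ N) {u : ℂ} (hu : u ≠ 0)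
    (hsi : pstar N q = C u * q)
    (hfac : ∀ ξ h, h.natDegree + 2 ≤ N → q ≠ (X - C ξ) * ((1 - C (conj' ξ) * X) * h)) :
    q.natDegree = N ∧ q.roots.toFinset.card = N ∧ ∀ ξ ∈ q.roots, ‖ξ‖ = 1 := by
  have hcirc {ξ : ℂ} (hroot : q.IsRoot ξ) : ‖ξ‖ = 1 := by
    by_contra hξ
    obtain ⟨h, hh, hq⟩ := exists_factor_of_isRoot_of_norm_ne_one hq0 hdeg hu hsi hroot hξ
    exact hfac ξ h hh hq
  have hsq (ξ : ℂ) : ¬ (X - C ξ) ^ 2 ∣ q := fun hdvd => by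
    have hroot : q.IsRoot ξ := dvd_iff_isRoot.1 ((dvd_pow_self _ two_ne_zero).trans hdvd)
    obtain ⟨h, hh, hq⟩ := exists_factor_of_sq_dvd hq0 hdeg (hcirc hroot) hdvd
    exact hfac ξ h hh hq
  have hcoeff0 : q.coeff 0 ≠ 0 := fun h0 => by
    simpa using hcirc (show q.IsRoot 0 by rwa [IsRoot, ← coeff_zero_eq_eval_zero])
  have hnat : q.natDegree = N := by
    refine hdeg.antisymm (le_natDegree_of_ne_zero fun hN => hcoeff0 ?_)
    have := congrArg (coeff · N) hsi
    simpa [coeff_pstar, hN, conj'] using this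
  refine ⟨hnat, ?_, fun ξ hξ => hcirc (isRoot_of_mem_roots hξ)⟩
  rw [Multiset.toFinset_card_of_nodup (nodup_roots_of_forall_not_sq_dvd hsq),
    IsAlgClosed.card_roots_eq_natDegree, hnat]

end SelfInversive

end ORF

theorem stmt14_general (α : ℕ → ℂ) (hα : ∀ j, ‖α j‖ < 1)
    (c : ℕ → Bool) (μ : Measure ℂ) (hμ : CircleMeasure μ)
    (φ : ℕ → ℂ → ℂ) (p : ℕ → Polynomial ℂ)
    (hφ : IsORF μ (piG α c) φ p)
    (n : ℕ) (hn : 1 ≤ n) (τ : ℂ) (hτ : ‖τ‖ = 1) :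
    (p n + Polynomial.C (τ * sigProd α n) * pstar n (p n)) ≠ 0 ∧
    (p n + Polynomial.C (τ * sigProd α n) * pstar n (p n)).natDegree = n ∧
    (p n + Polynomial.C (τ * sigProd α n) * pstar n (p n)).roots.toFinset.card = n ∧
    (∀ ξ ∈ (p n + Polynomial.C (τ * sigProd α n) * pstar n (p n)).roots,
      ‖ξ‖ = 1 ∧ (piG α c n).eval ξ ≠ 0) := by
  have hw : ‖τ * sigProd α n‖ = 1 := by rw [norm_mul, hτ, norm_sigProd, one_mul]
  have hq0 := paraOrth_ne_zero hα hμ hφ hn (τ * sigProd α n)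
  have hu : conj' (τ * sigProd α n) ≠ 0 := by
    simpa [conj'] using ne_zero_of_norm_ne_zero (hw.trans_ne one_ne_zero)
  obtain ⟨hdeg, hcard, hcirc⟩ := roots_of_pstar_eq_C_mul hq0 (natDegree_paraOrth_le hφ n _) hu
    (pstar_paraOrth hφ n hw) fun ξ _ hh => paraOrth_ne_factor hα hμ hφ _ ξ hh
  exact ⟨hq0, hdeg, hcard, fun ξ hξ => ⟨hcirc ξ hξ, piG_eval_ne_zero hα (hcirc ξ hξ) n⟩⟩

/-- Corollary `corzeros`: for n ≥ 1, τ ∈ 𝕋 and any ν (the sequence γ,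
encoded by `c`, is arbitrary: c ≡ true gives ν = α, c ≡ false gives ν = β), the PORF
Q_n^ν(z,τ) = φ_n^ν(z) + τ φ_n^{ν*}(z) has exactly n zeros, all simple and on 𝕋:
its numerator q = p_n^ν + τ ς_n p_n^{ν*} has degree n and n distinct roots, all of
modulus 1, none of them a root of π_n^ν. -/
theorem stmt14 (α : ℕ → ℂ) (hα0 : α 0 = 0) (hα : ∀ j, ‖α j‖ < 1)
    (c : ℕ → Bool) (μ : Measure ℂ) (hμ : CircleMeasure μ)
    (φ : ℕ → ℂ → ℂ) (p : ℕ → Polynomial ℂ)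
    (hφ : IsORF μ (piG α c) φ p) (hnφ : ∀ n, normG α c p n)
    (n : ℕ) (hn : 1 ≤ n) (τ : ℂ) (hτ : ‖τ‖ = 1) :
    (p n + Polynomial.C (τ * sigProd α n) * pstar n (p n)) ≠ 0 ∧
    (p n + Polynomial.C (τ * sigProd α n) * pstar n (p n)).natDegree = n ∧
    (p n + Polynomial.C (τ * sigProd α n) * pstar n (p n)).roots.toFinset.card = n ∧
    (∀ ξ ∈ (p n + Polynomial.C (τ * sigProd α n) * pstar n (p n)).roots,
      ‖ξ‖ = 1 ∧ (piG α c n).eval ξ ≠ 0) :=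
  stmt14_general α hα c μ hμ φ p hφ n hn τ hτ
end
end

section
/- Define L_{n*}^ν = {f_* : f ∈ L_n^ν} and R_n^ν = L_n^ν · L_{n*}^ν = {g·h : g ∈ L_n^ν, h ∈ L_{n*}^ν} for ν ∈ {α, β, γ}. Then for every n ≥ 0, R_n^γ = R_n^α = R_n^β. -/
noncomputable section
open MeasureTheory
open scoped Classical

/-!
On the unit circle the modulus of each β-factor is a constant multiple of the modulus of the
matching α-factor: `‖1 - conj a * z‖ = ‖z - a‖` when `‖z‖ = 1`, so
`‖1 - z / a‖ = ‖a‖⁻¹ ‖1 - conj a * z‖` (and `‖-z‖ = 1 = ‖1 - 0 * z‖`). Hence `|π_n^γ|`,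
`|π_n^α|` and `|π_n^β|` agree on `𝕋` up to positive constants. On `𝕋` an element of `R_n^ν`
is `p · conj q / |π_n^ν|²` with `deg p, deg q ≤ n`, so rescaling `p` moves between the three sets.
-/

namespace ORF

lemma norm_one_sub_conj_mul_eq {z : ℂ} (hz : ‖z‖ = 1) (a : ℂ) :
    ‖1 - conj' a * z‖ = ‖z - a‖ := by
  have h : conj' (z - a) * z = 1 - conj' a * z := by
    simp only [conj', map_sub, sub_mul, Complex.conj_mul', hz]
    norm_num
  rw [← h, norm_mul, conj', Complex.norm_conj, hz, mul_one]

lemma div_mul_conj_div (a b w : ℂ) : a / w * conj' (b / w) = a * conj' b / (‖w‖ : ℂ) ^ 2 := by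
  rw [conj', map_div₀, div_mul_div_comm, ← Complex.mul_conj']
  rfl

lemma mem_Rset_iff {pip : ℕ → Polynomial ℂ} {n : ℕ} {h : ℂ → ℂ} :
    h ∈ Rset pip n ↔ ∃ p q : Polynomial ℂ, p.natDegree ≤ n ∧ q.natDegree ≤ n ∧
      ∀ z, onT z → h z = p.eval z * conj' (q.eval z) / (‖(pip n).eval z‖ : ℂ) ^ 2 := by
  simp only [← div_mul_conj_div]
  constructor
  · rintro ⟨g, ⟨p, hp, hg⟩, k, ⟨q, hq, hk⟩, hprod⟩
    exact ⟨p, q, hp, hq, fun z hz => by rw [hprod z hz, hg z hz, hk z hz]⟩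
  · rintro ⟨p, q, hp, hq, hval⟩
    exact ⟨_, ⟨p, hp, fun _ _ => rfl⟩, _, ⟨q, hq, fun _ _ => rfl⟩, hval⟩

lemma Rset_subset_of_norm_eval_eq {pip pip' : ℕ → Polynomial ℂ} {n : ℕ} {C : ℝ}
    (h : ∀ z, onT z → ‖(pip n).eval z‖ = C * ‖(pip' n).eval z‖) :
    Rset pip n ⊆ Rset pip' n := by
  intro f hf
  obtain ⟨p, q, hp, hq, hval⟩ := mem_Rset_iff.1 hf
  refine mem_Rset_iff.2 ⟨((C ^ 2)⁻¹ : ℂ) • p, q,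
    (Polynomial.natDegree_smul_le _ _).trans hp, hq, fun z hz => ?_⟩
  rw [hval z hz, h z hz, Polynomial.eval_smul, smul_eq_mul]
  push_cast
  by_cases hC : (C : ℂ) = 0
  · simp [hC]
  · field_simp

lemma Rset_eq_of_norm_eval_eq {pip pip' : ℕ → Polynomial ℂ} {n : ℕ} {C : ℝ} (hC : C ≠ 0)
    (h : ∀ z, onT z → ‖(pip n).eval z‖ = C * ‖(pip' n).eval z‖) :
    Rset pip n = Rset pip' n :=
  (Rset_subset_of_norm_eval_eq h).antisymm <| Rset_subset_of_norm_eval_eq (C := C⁻¹)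
    fun z hz => by rw [h z hz, inv_mul_cancel_left₀ hC]

def factorScale (α : ℕ → ℂ) (c : ℕ → Bool) (j : ℕ) : ℝ :=
  if c j = false ∧ α j ≠ 0 then ‖α j‖⁻¹ else 1

lemma factorScale_ne_zero (α : ℕ → ℂ) (c : ℕ → Bool) (j : ℕ) : factorScale α c j ≠ 0 := by
  unfold factorScale
  split_ifs with h
  · exact inv_ne_zero (norm_ne_zero_iff.2 h.2)
  · exact one_ne_zero

lemma norm_eval_wG {α : ℕ → ℂ} {c : ℕ → Bool} {j : ℕ} {z : ℂ} (hz : onT z) :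
    ‖(wG α c j).eval z‖ = factorScale α c j * ‖(wA α j).eval z‖ := by
  by_cases hc : c j = true
  · simp [wG, factorScale, hc]
  by_cases h0 : α j = 0
  · simp only [wG, factorScale, hc, wB, wA, h0, if_true]
    simp [conj']
    exact hz
  rw [wG, factorScale, if_neg hc, if_pos ⟨by simpa using hc, h0⟩, wB, if_neg h0,
    show (wA α j).eval z = 1 - conj' (α j) * z by simp [wA], norm_one_sub_conj_mul_eq hz, norm_sub_rev, ← norm_inv, ← norm_mul]
  simp [mul_sub, h0]

lemma norm_eval_piG {α : ℕ → ℂ} {c : ℕ → Bool} {n : ℕ} {z : ℂ} (hz : onT z) :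
    ‖(piG α c n).eval z‖ = (∏ j ∈ Finset.Icc 1 n, factorScale α c j) * ‖(piA α n).eval z‖ := by
  simp only [piG, piA, Polynomial.eval_prod, norm_prod, norm_eval_wG hz, Finset.prod_mul_distrib]

lemma Rset_piG_eq_Rset_piA (α : ℕ → ℂ) (c : ℕ → Bool) (n : ℕ) :
    Rset (piG α c) n = Rset (piA α) n :=
  Rset_eq_of_norm_eval_eq (Finset.prod_ne_zero_iff.2 fun j _ => factorScale_ne_zero α c j)
    fun _ hz => norm_eval_piG hz

lemma piB_eq_piG (α : ℕ → ℂ) : piB α = piG α (fun _ => false) := by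
  funext n
  simp [piB, piG, wG]

end ORF

open ORF

theorem stmt15_general (α : ℕ → ℂ)
    (c : ℕ → Bool) (n : ℕ) :
    Rset (piG α c) n = Rset (piA α) n ∧ Rset (piG α c) n = Rset (piB α) n := by
  have hG := Rset_piG_eq_Rset_piA α c n
  refine ⟨hG, hG.trans ?_⟩
  rw [piB_eq_piG, Rset_piG_eq_Rset_piA]

/-- with L_{n*}^ν = {f_* : f ∈ L_n^ν} and R_n^ν = L_n^ν·L_{n*}^ν,
for every n ≥ 0, R_n^γ = R_n^α = R_n^β. -/
theorem stmt15 (α : ℕ → ℂ) (hα0 : α 0 = 0) (hα : ∀ j, ‖α j‖ < 1)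
    (c : ℕ → Bool) (n : ℕ) :
    Rset (piG α c) n = Rset (piA α) n ∧ Rset (piG α c) n = Rset (piB α) n :=
  stmt15_general α c n
end
end

section
/- Let π be an arbitrary permutation of (1, …, n), let M_π = ∏_{i∈π} G_i with each G_i a G-matrix of size (n+1)×(n+1), and let A and D be arbitrary diagonal (n+1)×(n+1) complex matrices. Then the determinant det(A·M_π + D), and hence also the characteristic polynomial and the eigenvalues of the AMPD matrix A·M_π + D, do not depend on the permutation π. -/
/-!
Each `G k` is the identity outside the indices `k, k + 1`, so `G j` and `G k` commute unless
`|j - k| = 1`, and any two orders of the product are linked by swaps of neighbouring factors.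
Swapping `G y` and `G x` with `y + 1 = x` turns the product `E * F` into `F * E`, where `E`
(the factors `G j` with `j < x`) is the identity outside the indices `≤ x` and `F` (the others)
outside the indices `≥ x`. For diagonal `Λ`, write `Λ - Λₓₓ = Λ₁ + Λ₂` with `Λ₁` supported
below `x` and `Λ₂` above it; then `E F + Λ = (E + Λ₁) (F + Λ₂) + Λₓₓ` and
`F E + Λ = (F + Λ₂) (E + Λ₁) + Λₓₓ`, whose determinants agree since
`det (X Y + c) = det (Y X + c)`. So `det (M_π + Λ)` does not depend on `π`. Factoring out `A`
gives the claim for invertible diagonal `A`, and both sides are polynomials in a scalar shift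
of `A`.
-/

noncomputable section

open Matrix

/-- A G-matrix of size (n+1)×(n+1) with block index k (0-based rows/columns k, k+1):
it equals the identity matrix outside of the 2×2 submatrix in rows and columns k, k+1. -/
def IsGMat {n : ℕ} (k : Fin n) (G : Matrix (Fin (n + 1)) (Fin (n + 1)) ℂ) : Prop :=
  ∀ i j : Fin (n + 1),
    ¬((i = k.castSucc ∨ i = k.succ) ∧ (j = k.castSucc ∨ j = k.succ)) →
    G i j = if i = j then 1 else 0

/-- M_π = G_{π(1)}·G_{π(2)}·⋯·G_{π(n)}, the product taken from left to right in the
order prescribed by the permutation π. -/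
def Mperm {n : ℕ} (G : Fin n → Matrix (Fin (n + 1)) (Fin (n + 1)) ℂ)
    (π : Equiv.Perm (Fin n)) : Matrix (Fin (n + 1)) (Fin (n + 1)) ℂ :=
  (List.ofFn (fun i : Fin n => G (π i))).prod

/-- the n×(n+1) projection matrix P = [I_n 0] deleting the last coordinate -/
def Pproj (n : ℕ) : Matrix (Fin n) (Fin (n + 1)) ℂ :=
  Matrix.of fun i j => if (j : ℕ) = (i : ℕ) then 1 else 0

open Polynomial

namespace Matrix

variable {ι R : Type*} [DecidableEq ι]

def IsOneOutside [Zero R] [One R] (s : Set ι) (M : Matrix ι ι R) : Prop :=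
  ∀ i j, ¬(i ∈ s ∧ j ∈ s) → M i j = (1 : Matrix ι ι R) i j

namespace IsOneOutside

variable {s t : Set ι} {M N : Matrix ι ι R}

theorem mono [Zero R] [One R] (h : IsOneOutside s M) (hst : s ⊆ t) : IsOneOutside t M :=
  fun i j hij => h i j fun ⟨hi, hj⟩ => hij ⟨hst hi, hst hj⟩

theorem one [Zero R] [One R] (s : Set ι) : IsOneOutside s (1 : Matrix ι ι R) :=
  fun _ _ _ => rfl

variable [Fintype ι]

theorem mul [NonAssocSemiring R] (hM : IsOneOutside s M) (hN : IsOneOutside s N) :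
    IsOneOutside s (M * N) := by
  intro i j hij
  rcases not_and_or.mp hij with hi | hj
  · have hrow : M i = (1 : Matrix ι ι R) i := funext fun k => hM i k fun h => hi h.1
    rw [mul_apply, ← hN i j fun h => hi h.1]
    simp [hrow, one_apply]
  · have hcol : ∀ k, N k j = (1 : Matrix ι ι R) k j := fun k => hN k j fun h => hj h.2
    rw [mul_apply, ← hM i j fun h => hj h.2]
    simp [hcol, one_apply]

theorem list_prod [NonAssocSemiring R] {L : List (Matrix ι ι R)}
    (h : ∀ M ∈ L, IsOneOutside s M) : IsOneOutside s L.prod := by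
  induction L with
  | nil => exact one s
  | cons M L ih =>
    simp only [List.prod_cons]
    exact (h M (by simp)).mul (ih fun N hN => h N (by simp [hN]))

theorem mul_diagonal [NonAssocSemiring R] (hM : IsOneOutside s M) {d : ι → R}
    (hd : ∀ i ∈ s, d i = 0) : M * diagonal d = diagonal d := by
  ext i j
  rw [Matrix.mul_diagonal]
  by_cases hj : j ∈ s
  · rcases eq_or_ne i j with rfl | hij <;> simp [hd _ hj, *]
  · rw [hM i j fun h => hj h.2]
    rcases eq_or_ne i j with rfl | hij <;> simp [*]

theorem diagonal_mul [NonAssocSemiring R] (hM : IsOneOutside s M) {d : ι → R}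
    (hd : ∀ i ∈ s, d i = 0) : diagonal d * M = diagonal d := by
  ext i j
  rw [Matrix.diagonal_mul]
  by_cases hi : i ∈ s
  · rcases eq_or_ne i j with rfl | hij <;> simp [hd _ hi, *]
  · rw [hM i j fun h => hi h.1]
    rcases eq_or_ne i j with rfl | hij <;> simp [*]

theorem sub_one_mul_sub_one [Ring R] (hM : IsOneOutside s M) (hN : IsOneOutside t N)
    (hst : Disjoint s t) : (M - 1) * (N - 1) = 0 := by
  ext i j
  rw [mul_apply]
  refine Finset.sum_eq_zero fun k _ => ?_
  by_cases hik : i ∈ s ∧ k ∈ s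
  · rw [sub_apply N, hN k j fun h => hst.notMem_of_mem_left hik.2 h.1, sub_self, mul_zero]
  · rw [sub_apply M, hM i k hik, sub_self, zero_mul]

theorem commute [Ring R] (hM : IsOneOutside s M) (hN : IsOneOutside t N)
    (hst : Disjoint s t) : Commute M N := by
  have h₁ := hM.sub_one_mul_sub_one hN hst
  have h₂ := hN.sub_one_mul_sub_one hM hst.symm
  calc M * N = (M - 1) * (N - 1) + M + N - 1 := by noncomm_ring
    _ = (N - 1) * (M - 1) + N + M - 1 := by rw [h₁, h₂]; abel
    _ = N * M := by noncomm_ring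

end IsOneOutside

variable [Fintype ι]

theorem det_mul_add_smul_one_comm [CommRing R] (X Y : Matrix ι ι R) (c : R) :
    det (X * Y + c • 1) = det (Y * X + c • 1) := by
  have h : ∀ M : Matrix ι ι R,
      det (M + c • 1) = (-1) ^ Fintype.card ι * M.charpoly.eval (-c) := by
    intro M
    rw [eval_charpoly, ← det_neg]
    congr 1
    ext i j
    by_cases hij : i = j <;> simp [hij]
  rw [h, h, charpoly_mul_comm]

theorem det_eq_of_infinite_setOf_det_add_smul_eq [CommRing R] [IsDomain R]
    {P Q P' Q' : Matrix ι ι R} (h : {s : R | det (Q + s • P) = det (Q' + s • P')}.Infinite) :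
    det Q = det Q' := by
  let p : Matrix ι ι R → Matrix ι ι R → R[X] := fun U V => det (V.map C + (X : R[X]) • U.map C)
  have hp : ∀ U V s, (p U V).eval s = det (V + s • U) := by
    intro U V s
    rw [← coe_evalRingHom, RingHom.map_det, RingHom.mapMatrix_apply]
    congr 1
    ext i j
    simp only [map_apply, add_apply, smul_apply, smul_eq_mul, coe_evalRingHom, eval_add, eval_C,
      eval_mul, eval_X]
  have hpp := eq_of_infinite_eval_eq (p P Q) (p P' Q') (by simpa only [hp] using h)
  simpa [hp] using congrArg (eval 0) hpp

theorem det_mul_add_diagonal_comm [CommRing R] {S T : Set ι} {t : ι} {E F : Matrix ι ι R}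
    (hE : IsOneOutside S E) (hF : IsOneOutside T F) (hST : S ∩ T ⊆ {t}) (d : ι → R) :
    det (E * F + diagonal d) = det (F * E + diagonal d) := by
  classical
  set c := d t
  set d₁ : ι → R := fun i => if i ∈ S then d i - c else 0
  set d₂ : ι → R := fun i => if i ∈ S then 0 else d i - c
  have hd₁ : ∀ i ∈ T, d₁ i = 0 := by
    intro i hi
    by_cases hiS : i ∈ S
    · obtain rfl : i = t := hST ⟨hiS, hi⟩
      simp [d₁, c]
    · simp [d₁, hiS]
  have hd₂ : ∀ i ∈ S, d₂ i = 0 := fun i hi => by simp [d₂, hi]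
  have hd : diagonal d = diagonal d₁ + diagonal d₂ + c • 1 := by
    ext i j
    rcases eq_or_ne i j with rfl | hij
    · by_cases hi : i ∈ S <;> simp [d₁, d₂, hi]
    · simp [hij]
  have h₁₂ : diagonal d₁ * diagonal d₂ = 0 := by
    rw [diagonal_mul_diagonal, ← diagonal_zero]
    congr 1
    ext i
    by_cases hi : i ∈ S <;> simp [d₁, d₂, hi]
  have h₂₁ : diagonal d₂ * diagonal d₁ = 0 := (commute_diagonal d₁ d₂).eq ▸ h₁₂
  calc det (E * F + diagonal d) = det ((E + diagonal d₁) * (F + diagonal d₂) + c • 1) := by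
        rw [add_mul, mul_add, mul_add, hE.mul_diagonal hd₂, hF.diagonal_mul hd₁, h₁₂, hd]
        abel_nf
    _ = det ((F + diagonal d₂) * (E + diagonal d₁) + c • 1) := det_mul_add_smul_one_comm _ _ _
    _ = det (F * E + diagonal d) := by
        rw [add_mul, mul_add, mul_add, hF.mul_diagonal hd₁, hE.diagonal_mul hd₂, h₂₁, hd]
        abel_nf

theorem scalar_sub_diagonal_mul_add_diagonal [CommRing R] (t : R) (a d : ι → R)
    (M : Matrix ι ι R) :
    scalar ι t - (diagonal a * M + diagonal d) =
      diagonal (fun i => -a i) * M + diagonal fun i => t - d i := by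
  rw [scalar_apply, ← diagonal_neg, neg_mul, ← diagonal_sub]
  abel

theorem diagonal_mul_add_diagonal_sub_smul_one [CommRing R] (a d : ι → R) (M : Matrix ι ι R)
    (c : R) :
    diagonal a * M + diagonal d - c • 1 = diagonal a * M + diagonal fun i => d i - c := by
  rw [add_sub_assoc, ← diagonal_one, ← diagonal_smul, diagonal_sub]
  simp

theorem det_diagonal_mul_add_diagonal_eq {K : Type*} [Field K] [Infinite K] {M N : Matrix ι ι K}
    (h : ∀ d, det (M + diagonal d) = det (N + diagonal d))
    (a d : ι → K) : det (diagonal a * M + diagonal d) = det (diagonal a * N + diagonal d) := by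
  have hunit : ∀ a : ι → K, (∀ i, a i ≠ 0) →
      det (diagonal a * M + diagonal d) = det (diagonal a * N + diagonal d) := by
    intro a ha
    have hfac : ∀ X : Matrix ι ι K,
        diagonal a * X + diagonal d = diagonal a * (X + diagonal fun i => d i / a i) := by
      intro X
      rw [mul_add, diagonal_mul_diagonal]
      congr 2
      ext i
      field_simp [ha i]
    rw [hfac, hfac, det_mul, det_mul, h]
  refine det_eq_of_infinite_setOf_det_add_smul_eq (P := M) (P' := N) ?_
  refine (Set.finite_range fun i => -a i).infinite_compl.mono fun s hs => ?_
  have hshift : ∀ X : Matrix ι ι K,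
      diagonal a * X + diagonal d + s • X = diagonal (fun i => a i + s) * X + diagonal d := by
    intro X
    ext i j
    simp only [Matrix.add_apply, Matrix.smul_apply, Matrix.diagonal_mul, smul_eq_mul]
    ring
  simpa only [Set.mem_ofPred_eq, hshift] using
    hunit _ fun i hi => hs ⟨i, by linear_combination -hi⟩

end Matrix

theorem List.prod_map_eq_prod_map_filter_mul_of_pairwise {α M : Type*} [Monoid M] (f : α → M)
    (p : α → Bool) {w : List α}
    (h : w.Pairwise fun j k => p j = false → p k → Commute (f j) (f k)) :
    (w.map f).prod = ((w.filter p).map f).prod * ((w.filter fun j => !p j).map f).prod := by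
  induction w with
  | nil => simp
  | cons j w ih =>
    obtain ⟨hj, hw⟩ := List.pairwise_cons.1 h
    by_cases hpj : p j
    · simp [hpj, ih hw, mul_assoc]
    · have hcomm : Commute (f j) ((w.filter p).map f).prod :=
        Commute.list_prod_right _ _ fun x hx => by
          obtain ⟨k, hk, rfl⟩ := List.mem_map.1 hx
          exact hj k (List.mem_of_mem_filter hk) (by simpa using hpj) (List.of_mem_filter hk)
      simp [hpj, ih hw, ← mul_assoc, hcomm.eq]

theorem List.pairwise_imp_ne_of_nodup_append_cons_cons {α : Type*} {r l : List α} {a b : α}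
    (h : (r ++ a :: b :: l).Nodup) : (r ++ a :: b :: l).Pairwise fun j k => j = b → k ≠ a := by
  simp only [List.nodup_append, List.nodup_cons, List.mem_cons, not_or] at h
  obtain ⟨-, ⟨⟨hab, hal⟩, hbl, -⟩, hr⟩ := h
  have hbr : b ∉ r := fun hb => hr b hb b (Or.inr (Or.inl rfl)) rfl
  refine List.pairwise_append.2 ⟨?_, ?_, fun j hj _ _ hjb => absurd (hjb ▸ hj) hbr⟩
  · exact List.pairwise_of_forall_mem_list fun j hj _ _ hjb => absurd (hjb ▸ hj) hbr
  · refine List.pairwise_cons.2 ⟨fun _ _ hab' => absurd hab' hab, ?_⟩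
    refine List.pairwise_cons.2 ⟨fun k hk _ hka => hal (hka ▸ hk), ?_⟩
    exact List.pairwise_of_forall_mem_list fun j hj _ _ hjb => absurd (hjb ▸ hj) hbl

section GMatrix

variable {R : Type*} [CommRing R] {n : ℕ} {G : Fin n → Matrix (Fin (n + 1)) (Fin (n + 1)) R}

theorem commute_of_add_one_lt (hG : ∀ k, IsOneOutside {k.castSucc, k.succ} (G k))
    {j k : Fin n} (h : (j : ℕ) + 1 < k) : Commute (G j) (G k) :=
  (hG j).commute (hG k) <| by
    simp only [Set.disjoint_insert_left, Set.disjoint_insert_right, Set.disjoint_singleton,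
      Set.mem_insert_iff, Set.mem_singleton_iff, Fin.ext_iff, Fin.val_castSucc, Fin.val_succ, ne_eq]
    omega

theorem det_prod_map_add_diagonal_swap (hG : ∀ k, IsOneOutside {k.castSucc, k.succ} (G k))
    (d : Fin (n + 1) → R) {x y : Fin n} (hxy : (y : ℕ) + 1 = x) {r l : List (Fin n)}
    (h : (r ++ y :: x :: l).Nodup) :
    det (((r ++ y :: x :: l).map G).prod + diagonal d) =
      det (((r ++ x :: y :: l).map G).prod + diagonal d) := by
  -- Across the split into `j < x` and `x ≤ j`, only the pair `G y, G x` fails to commute.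
  let p : Fin n → Bool := fun j => j < x
  have hyx : y < x := by rw [Fin.lt_def]; omega
  set E := (((r ++ y :: x :: l).filter p).map G).prod
  set F := (((r ++ y :: x :: l).filter fun j => !p j).map G).prod
  have h₁ : ((r ++ y :: x :: l).map G).prod = E * F := by
    refine List.prod_map_eq_prod_map_filter_mul_of_pairwise G p
      ((List.pairwise_imp_ne_of_nodup_append_cons_cons h).imp fun {j k} hjk hj hk => ?_)
    simp only [p, decide_eq_false_iff_not, decide_eq_true_eq, not_lt, Fin.lt_def,
      Fin.ext_iff] at hjk hj hk
    exact (commute_of_add_one_lt hG (by omega)).symm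
  have h₂ : ((r ++ x :: y :: l).map G).prod = F * E := by
    have h' := ((List.Perm.swap x y l).append_left r).nodup_iff.1 h
    rw [List.prod_map_eq_prod_map_filter_mul_of_pairwise G (fun j => !p j)
      ((List.pairwise_imp_ne_of_nodup_append_cons_cons h').imp fun {j k} hjk hj hk => ?_)]
    · simp [E, F, List.filter_append, p, hyx]
    simp only [p, Bool.not_eq_false', Bool.not_eq_true', decide_eq_false_iff_not, decide_eq_true_eq,
      not_lt, Fin.lt_def, Fin.ext_iff] at hjk hj hk
    exact commute_of_add_one_lt hG (by omega)
  have hE : IsOneOutside (Set.Iic x.castSucc) E := by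
    refine IsOneOutside.list_prod fun M hM => ?_
    obtain ⟨j, hj, rfl⟩ := List.mem_map.1 hM
    have hjx : (j : ℕ) < x := Fin.lt_def.1 (by simpa [p] using List.of_mem_filter hj)
    refine (hG j).mono ?_
    simp only [Set.insert_subset_iff, Set.singleton_subset_iff, Set.mem_Iic, Fin.le_def,
      Fin.val_castSucc, Fin.val_succ]
    omega
  have hF : IsOneOutside (Set.Ici x.castSucc) F := by
    refine IsOneOutside.list_prod fun M hM => ?_
    obtain ⟨j, hj, rfl⟩ := List.mem_map.1 hM
    have hxj : (x : ℕ) ≤ j := Fin.le_def.1 (by simpa [p] using List.of_mem_filter hj)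
    refine (hG j).mono ?_
    simp only [Set.insert_subset_iff, Set.singleton_subset_iff, Set.mem_Ici, Fin.le_def,
      Fin.val_castSucc, Fin.val_succ]
    omega
  rw [h₁, h₂]
  exact det_mul_add_diagonal_comm hE hF (by rw [Set.Iic_inter_Ici, Set.Icc_self]) d

theorem det_prod_map_add_diagonal_eq_of_perm (hG : ∀ k, IsOneOutside {k.castSucc, k.succ} (G k))
    (d : Fin (n + 1) → R) {l₁ l₂ : List (Fin n)} (hl : l₁.Perm l₂) (r : List (Fin n))
    (hnd : (r ++ l₁).Nodup) :
    det (((r ++ l₁).map G).prod + diagonal d) = det (((r ++ l₂).map G).prod + diagonal d) := by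
  induction hl generalizing r with
  | nil => rfl
  | @cons z l₁ l₂ _ ih =>
    rw [List.append_cons r z l₁] at hnd ⊢
    rw [List.append_cons r z l₂]
    exact ih _ hnd
  | swap x y l =>
    by_cases hyx : (y : ℕ) + 1 = x
    · exact det_prod_map_add_diagonal_swap hG d hyx hnd
    by_cases hxy : (x : ℕ) + 1 = y
    · exact (det_prod_map_add_diagonal_swap hG d hxy
        (((List.Perm.swap x y l).append_left r).nodup_iff.1 hnd)).symm
    have hne : (y : ℕ) ≠ x := fun h => by
      simp [Fin.ext h, List.nodup_append] at hnd
    have hc : Commute (G y) (G x) := by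
      rcases hne.lt_or_gt with h | h
      · exact commute_of_add_one_lt hG (by omega)
      · exact (commute_of_add_one_lt hG (by omega)).symm
    simp only [List.map_append, List.map_cons, List.prod_append, List.prod_cons, hc.left_comm]
  | trans h₁₂ _ ih₁₂ ih₂₃ =>
    exact (ih₁₂ r hnd).trans (ih₂₃ r ((h₁₂.append_left r).nodup_iff.1 hnd))

end GMatrix

theorem IsGMat.isOneOutside {n : ℕ} {k : Fin n} {G : Matrix (Fin (n + 1)) (Fin (n + 1)) ℂ}
    (h : IsGMat k G) : IsOneOutside {k.castSucc, k.succ} G :=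
  fun i j hij => (h i j hij).trans Matrix.one_apply.symm

theorem det_Mperm_add_diagonal_eq {n : ℕ} {G : Fin n → Matrix (Fin (n + 1)) (Fin (n + 1)) ℂ}
    (hG : ∀ k, IsOneOutside {k.castSucc, k.succ} (G k)) (π₁ π₂ : Equiv.Perm (Fin n))
    (d : Fin (n + 1) → ℂ) :
    det (Mperm G π₁ + diagonal d) = det (Mperm G π₂ + diagonal d) := by
  have hM : ∀ π : Equiv.Perm (Fin n), Mperm G π = ((List.ofFn π).map G).prod := by
    intro π
    rw [Mperm, List.map_ofFn]
    rfl
  have hperm : (List.ofFn π₁).Perm (List.ofFn π₂) :=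
    (π₁.ofFn_comp_perm id).trans (π₂.ofFn_comp_perm id).symm
  simpa only [hM, List.nil_append] using det_prod_map_add_diagonal_eq_of_perm hG d hperm []
    (List.nodup_ofFn.2 π₁.injective)

/-- Corollary `corAMPD4`: the determinant — hence also the
characteristic polynomial and the eigenvalues — of the AMPD matrix A·M_π + D does
not depend on the permutation π. -/
theorem stmt18 (n : ℕ) (G : Fin n → Matrix (Fin (n + 1)) (Fin (n + 1)) ℂ)
    (hG : ∀ k : Fin n, IsGMat k (G k))
    (A D : Matrix (Fin (n + 1)) (Fin (n + 1)) ℂ) (hA : A.IsDiag) (hD : D.IsDiag)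
    (π₁ π₂ : Equiv.Perm (Fin n)) :
    (A * Mperm G π₁ + D).det = (A * Mperm G π₂ + D).det ∧
    (A * Mperm G π₁ + D).charpoly = (A * Mperm G π₂ + D).charpoly ∧
    ∀ lam : ℂ, ((A * Mperm G π₁ + D - lam • 1).det = 0 ↔
      (A * Mperm G π₂ + D - lam • 1).det = 0) := by
  have hdet : ∀ a d : Fin (n + 1) → ℂ,
      det (diagonal a * Mperm G π₁ + diagonal d) = det (diagonal a * Mperm G π₂ + diagonal d) :=
    det_diagonal_mul_add_diagonal_eq
      (det_Mperm_add_diagonal_eq (fun k => (hG k).isOneOutside) π₁ π₂)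
  rw [← hA.diagonal_diag, ← hD.diagonal_diag]
  refine ⟨hdet _ _, Polynomial.funext fun t => ?_, fun lam => ?_⟩
  · simp only [eval_charpoly, scalar_sub_diagonal_mul_add_diagonal, hdet]
  · simp only [diagonal_mul_add_diagonal_sub_smul_one, hdet]
end
end

section
/- Let π be an arbitrary permutation of (1, …, n), let M_π = ∏_{i∈π} G_i with each G_i a G-matrix of size (n+1)×(n+1), and let A, B, C, D be arbitrary diagonal (n+1)×(n+1) complex matrices. Then the polynomial λ ↦ det((A·M_π + C) − λ·(B·M_π + D)) does not depend on the permutation π; in particular, the generalized eigenvalues of the pencil (A·M_π + C, B·M_π + D) do not depend on π, and if B·M_π + D is invertible, the eigenvalues of the RAMPD matrix R = (A·M_π + C)·(B·M_π + D)^{−1} do not depend on π. -/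
noncomputable section

open Matrix

/-!
Expanding `det (E * M + F)` row by row writes it as `∑ₛ (∏_{i ∈ s} eᵢ) (∏_{i ∉ s} fᵢ) det M[s, s]`,
so it suffices that every principal minor of `M_π` is independent of `π`. In fact
`det M_π[s, s] = ∏ₖ det G_k[s, s]`: after peeling off the first factor `G_k`, the remaining
product `P` does not mix the coordinates `≤ k` with those `> k`, and for such `P` the principal
minors of `G_k * P` are the products of those of `G_k` and of `P`.
-/

namespace Matrix

variable {ι R : Type*} [DecidableEq ι] [CommRing R]

def IsBlockDiag (L : Finset ι) (M : Matrix ι ι R) : Prop :=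
  ∀ i j, (i ∈ L ↔ j ∉ L) → M i j = 0

theorem isBlockDiag_one (L : Finset ι) : IsBlockDiag L (1 : Matrix ι ι R) :=
  fun i j hij => one_apply_ne fun h => by subst h; tauto

def IsIdentityOffPair (p q : ι) (a : Matrix ι ι R) : Prop :=
  ∀ i j, ¬((i = p ∨ i = q) ∧ (j = p ∨ j = q)) → a i j = (1 : Matrix ι ι R) i j

theorem IsIdentityOffPair.symm {p q : ι} {a : Matrix ι ι R} (ha : IsIdentityOffPair p q a) :
    IsIdentityOffPair q p a :=
  fun i j hij => ha i j fun h => hij (by tauto)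

theorem IsIdentityOffPair.apply_eq_zero {p q : ι} {a : Matrix ι ι R}
    (ha : IsIdentityOffPair p q a) {s : Finset ι} (hs : p ∈ s ↔ q ∈ s) :
    ∀ i ∈ s, ∀ j ∉ s, a i j = 0 := by
  intro i hi j hj
  rw [ha i j fun h => by rcases h with ⟨rfl | rfl, rfl | rfl⟩ <;> tauto]
  exact one_apply_ne fun h => hj (h ▸ hi)

variable [Fintype ι]

theorem IsBlockDiag.compl {L : Finset ι} {M : Matrix ι ι R} (hM : IsBlockDiag L M) :
    IsBlockDiag Lᶜ M :=
  fun i j hij => hM i j (by rw [Finset.mem_compl, Finset.mem_compl, not_not] at hij; tauto)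

theorem IsIdentityOffPair.isBlockDiag {p q : ι} {a : Matrix ι ι R}
    (ha : IsIdentityOffPair p q a) {L : Finset ι} (hL : p ∈ L ↔ q ∈ L) : IsBlockDiag L a := by
  intro i j hij
  by_cases hi : i ∈ L
  · exact ha.apply_eq_zero hL i hi j (hij.mp hi)
  · exact ha.apply_eq_zero (s := Lᶜ) (by simp only [Finset.mem_compl]; exact not_congr hL) i
      (Finset.mem_compl.mpr hi) j (by rw [Finset.mem_compl, not_not]; tauto)

theorem IsBlockDiag.mul {L : Finset ι} {M N : Matrix ι ι R} (hM : IsBlockDiag L M)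
    (hN : IsBlockDiag L N) : IsBlockDiag L (M * N) := by
  intro i j hij
  rw [mul_apply]
  refine Finset.sum_eq_zero fun l _ => ?_
  by_cases hl : l ∈ L ↔ j ∉ L
  · rw [hN l j hl, mul_zero]
  · rw [hM i l (by tauto), zero_mul]

theorem IsBlockDiag.list_prod {L : Finset ι} {l : List (Matrix ι ι R)}
    (hl : ∀ M ∈ l, IsBlockDiag L M) : IsBlockDiag L l.prod := by
  induction l with
  | nil => exact isBlockDiag_one L
  | cons M l ih =>
    rw [List.prod_cons]
    exact (hl M List.mem_cons_self).mul (ih fun N hN => hl N (List.mem_cons_of_mem M hN))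

/-- The principal minor of `M` on `s`, encoded as the determinant of `M` with the rows outside `s`
replaced by rows of the identity; `Matrix.det_piecewise_one_eq_submatrix_det` identifies it with
the determinant of the principal submatrix. -/
def principalMinor (s : Finset ι) (M : Matrix ι ι R) : R :=
  (of fun i => if i ∈ s then M i else (1 : Matrix ι ι R) i).det

@[simp]
theorem principalMinor_one (s : Finset ι) : principalMinor s (1 : Matrix ι ι R) = 1 := by
  simp only [principalMinor, ite_self]
  exact det_one

theorem det_diagonal_mul_add_diagonal (e f : ι → R) (M : Matrix ι ι R) :
    (diagonal e * M + diagonal f).det =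
      ∑ s : Finset ι, (∏ i ∈ s, e i) * (∏ i ∈ sᶜ, f i) * principalMinor s M := by
  have hrows : diagonal e * M + diagonal f =
      (fun i => e i • M i) + fun i => f i • (1 : Matrix ι ι R) i := by
    ext i j
    simp [diagonal_mul, diagonal_apply, one_apply]
  rw [hrows]
  simp only [det]
  rw [AlternatingMap.map_add_univ]
  refine Finset.sum_congr rfl fun s _ => ?_
  have hpiece : s.piecewise (fun i => e i • M i) (fun i => f i • (1 : Matrix ι ι R) i) =
      fun i => s.piecewise e f i • if i ∈ s then M i else (1 : Matrix ι ι R) i := by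
    ext i
    by_cases hi : i ∈ s <;> simp [hi]
  rw [hpiece, AlternatingMap.map_smul_univ, smul_eq_mul, Finset.prod_piecewise,
    Finset.univ_inter, Finset.compl_eq_univ_sdiff]
  rfl

theorem det_eq_zero_of_card_lt {M : Matrix ι ι R} (rows cols : Finset ι)
    (hcard : cols.card < rows.card) (hM : ∀ i ∈ rows, ∀ j ∉ cols, M i j = 0) : M.det = 0 := by
  rw [det_apply]
  refine Finset.sum_eq_zero fun σ _ => ?_
  obtain ⟨j, hj, hjc⟩ := Finset.exists_mem_notMem_of_card_lt_card
    (s := cols) (t := rows.map σ.symm.toEmbedding) (by rwa [Finset.card_map])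
  rw [Finset.mem_map_equiv, Equiv.symm_symm] at hj
  rw [Finset.prod_eq_zero (f := fun i => M (σ i) i) (Finset.mem_univ j) (hM _ hj j hjc),
    smul_zero]

theorem principalMinor_mul_of_apply_eq_zero {s : Finset ι} {a : Matrix ι ι R}
    (ha : ∀ i ∈ s, ∀ j ∉ s, a i j = 0) (P : Matrix ι ι R) :
    principalMinor s (a * P) = principalMinor s a * principalMinor s P := by
  rw [principalMinor, principalMinor, principalMinor, ← det_mul]
  congr 1
  ext i j
  by_cases hi : i ∈ s
  · simp only [of_apply, if_pos hi, mul_apply]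
    refine Finset.sum_congr rfl fun l _ => ?_
    by_cases hl : l ∈ s
    · simp [hl]
    · simp [hl, ha i hi l hl]
  · simp [hi, mul_apply, one_apply]

/-- Row `p` of `a * P` is `a p p • P p + a p q • P q`; with row `p` replaced by `P q`, the
`Lᶜ.card + 1` rows `insert p Lᶜ` are supported in the columns `Lᶜ`, so that term vanishes. -/
theorem principalMinor_mul_of_mem_of_notMem {p q : ι} {a P : Matrix ι ι R} {L s : Finset ι}
    (ha : IsIdentityOffPair p q a) (hP : IsBlockDiag L P) (hpL : p ∈ L) (hqL : q ∉ L)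
    (hps : p ∈ s) (hqs : q ∉ s) :
    principalMinor s (a * P) = a p p * principalMinor s P := by
  set N : Matrix ι ι R := of fun i => if i ∈ s then P i else (1 : Matrix ι ι R) i
  have hpq : p ≠ q := fun h => hqL (h ▸ hpL)
  have hrows : (of fun i => if i ∈ s then (a * P) i else (1 : Matrix ι ι R) i) =
      N.updateRow p (a p p • P p + a p q • P q) := by
    ext i j
    by_cases hip : i = p
    · subst hip
      simp only [of_apply, if_pos hps, updateRow_self, mul_apply, Pi.add_apply, Pi.smul_apply,
        smul_eq_mul]
      exact Fintype.sum_eq_add _ _ hpq fun l hl => by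
        rw [ha i l fun h => by tauto, one_apply_ne (Ne.symm hl.1), zero_mul]
    · rw [updateRow_ne hip]
      by_cases his : i ∈ s
      · have hrow : ∀ l, a i l = (1 : Matrix ι ι R) i l :=
          fun l => ha i l fun h => h.1.elim hip fun hiq => hqs (hiq ▸ his)
        simp [N, his, mul_apply, hrow, one_apply]
      · simp [N, his]
  have hzero : (N.updateRow p (P q)).det = 0 := by
    refine det_eq_zero_of_card_lt (insert p Lᶜ) Lᶜ
      (Finset.card_lt_card (Finset.ssubset_insert (by simpa using hpL))) ?_
    intro i hi j hj
    rw [Finset.mem_compl, not_not] at hj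
    rcases Finset.mem_insert.mp hi with rfl | hi
    · rw [updateRow_self]
      exact hP q j (by tauto)
    · rw [Finset.mem_compl] at hi
      rw [updateRow_ne fun h => hi (by rw [h]; exact hpL)]
      by_cases his : i ∈ s
      · simpa [N, his] using hP i j (by tauto)
      · simpa [N, his] using one_apply_ne (α := R) fun h => hi (by rw [h]; exact hj)
  have hNp : N p = P p := if_pos hps
  rw [principalMinor, hrows, det_updateRow_add, det_updateRow_smul, det_updateRow_smul, hzero,
    mul_zero, add_zero, ← hNp, updateRow_eq_self]
  rfl

theorem principalMinor_mul {p q : ι} {a P : Matrix ι ι R} {L : Finset ι}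
    (ha : IsIdentityOffPair p q a) (hP : IsBlockDiag L P) (hpL : p ∈ L) (hqL : q ∉ L)
    (s : Finset ι) : principalMinor s (a * P) = principalMinor s a * principalMinor s P := by
  have key : ∀ {p q : ι} {L : Finset ι}, IsIdentityOffPair p q a → IsBlockDiag L P → p ∈ L →
      q ∉ L → p ∈ s → q ∉ s →
      principalMinor s (a * P) = principalMinor s a * principalMinor s P := by
    intro p q L ha hP hpL hqL hps hqs
    have ha' := principalMinor_mul_of_mem_of_notMem ha (isBlockDiag_one L) hpL hqL hps hqs
    rw [mul_one, principalMinor_one, mul_one] at ha'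
    rw [principalMinor_mul_of_mem_of_notMem ha hP hpL hqL hps hqs, ha']
  by_cases hps : p ∈ s <;> by_cases hqs : q ∈ s
  · exact principalMinor_mul_of_apply_eq_zero (ha.apply_eq_zero (by tauto)) P
  · exact key ha hP hpL hqL hps hqs
  · exact key ha.symm hP.compl (by simpa using hqL) (by simpa using hpL) hqs hps
  · exact principalMinor_mul_of_apply_eq_zero (ha.apply_eq_zero (by tauto)) P

theorem principalMinor_list_prod {κ : Type*} (G : κ → Matrix ι ι R) (p q : κ → ι)
    (L : κ → Finset ι) (hG : ∀ k, IsIdentityOffPair (p k) (q k) (G k)) (hp : ∀ k, p k ∈ L k)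
    (hq : ∀ k, q k ∉ L k) (hL : ∀ j k, j ≠ k → (p j ∈ L k ↔ q j ∈ L k)) (s : Finset ι)
    {l : List κ} (hl : l.Nodup) :
    principalMinor s (l.map G).prod = (l.map fun k => principalMinor s (G k)).prod := by
  induction l with
  | nil => simp
  | cons k l ih =>
    rw [List.nodup_cons] at hl
    have hblock : IsBlockDiag (L k) (l.map G).prod := by
      refine IsBlockDiag.list_prod fun M hM => ?_
      obtain ⟨j, hj, rfl⟩ := List.mem_map.mp hM
      exact (hG j).isBlockDiag (hL j k fun h => hl.1 (h ▸ hj))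
    rw [List.map_cons, List.prod_cons, principalMinor_mul (hG k) hblock (hp k) (hq k), ih hl.2,
      List.map_cons, List.prod_cons]

theorem IsDiag.pencil_eq {A B C D : Matrix ι ι R} (hA : A.IsDiag) (hB : B.IsDiag)
    (hC : C.IsDiag) (hD : D.IsDiag) (M : Matrix ι ι R) (lam : R) :
    (A * M + C) - lam • (B * M + D) =
      diagonal (A.diag - lam • B.diag) * M + diagonal (C.diag - lam • D.diag) := by
  conv_lhs => rw [← hA.diagonal_diag, ← hB.diagonal_diag, ← hC.diagonal_diag, ← hD.diagonal_diag]
  ext i j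
  by_cases hij : i = j <;> simp [diagonal_mul, hij] <;> ring

theorem det_mul_inv_sub_smul_one_eq_zero_iff {X Y : Matrix ι ι R} (hY : IsUnit Y.det) (lam : R) :
    (X * Y⁻¹ - lam • 1).det = 0 ↔ (X - lam • Y).det = 0 := by
  rw [← mul_nonsing_inv Y hY, ← smul_mul, ← sub_mul, det_mul,
    (isUnit_nonsing_inv_det Y hY).mul_left_eq_zero]

end Matrix

theorem principalMinor_mperm {n : ℕ} {G : Fin n → Matrix (Fin (n + 1)) (Fin (n + 1)) ℂ}
    (hG : ∀ k, IsGMat k (G k)) (π : Equiv.Perm (Fin n)) (s : Finset (Fin (n + 1))) :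
    principalMinor s (Mperm G π) = ∏ k, principalMinor s (G k) := by
  have hM : Mperm G π = ((List.ofFn π).map G).prod := by
    rw [List.map_ofFn]
    rfl
  rw [hM, principalMinor_list_prod G Fin.castSucc Fin.succ (fun k => Finset.Iic k.castSucc)
    (fun k i j hij => (hG k i j hij).trans Matrix.one_apply.symm) (fun k => by simp)
    (fun k => by simp) (fun j k hjk => by simp [lt_iff_le_and_ne, hjk]) s
    (List.nodup_ofFn.mpr π.injective), List.map_ofFn, List.prod_ofFn]
  exact Equiv.prod_comp π fun k => principalMinor s (G k)

theorem det_diagonal_mul_mperm_add_diagonal {n : ℕ}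
    {G : Fin n → Matrix (Fin (n + 1)) (Fin (n + 1)) ℂ} (hG : ∀ k, IsGMat k (G k))
    (e f : Fin (n + 1) → ℂ) (π₁ π₂ : Equiv.Perm (Fin n)) :
    (diagonal e * Mperm G π₁ + diagonal f).det = (diagonal e * Mperm G π₂ + diagonal f).det := by
  simp only [det_diagonal_mul_add_diagonal, principalMinor_mperm hG]

/-- Theorem `thmRAMPD`: the polynomial λ ↦ det((A·M_π + C) − λ(B·M_π + D))
does not depend on the permutation π; in particular the generalized eigenvalues of the
pencil (A·M_π + C, B·M_π + D) do not depend on π, and if B·M_π + D is invertible,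
the eigenvalues of the RAMPD matrix R = (A·M_π + C)(B·M_π + D)⁻¹ do not depend on π. -/
theorem stmt19 (n : ℕ) (G : Fin n → Matrix (Fin (n + 1)) (Fin (n + 1)) ℂ)
    (hG : ∀ k : Fin n, IsGMat k (G k))
    (A B C D : Matrix (Fin (n + 1)) (Fin (n + 1)) ℂ)
    (hA : A.IsDiag) (hB : B.IsDiag) (hC : C.IsDiag) (hD : D.IsDiag)
    (π₁ π₂ : Equiv.Perm (Fin n)) :
    (∀ lam : ℂ,
      ((A * Mperm G π₁ + C) - lam • (B * Mperm G π₁ + D)).det =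
        ((A * Mperm G π₂ + C) - lam • (B * Mperm G π₂ + D)).det) ∧
    (IsUnit (B * Mperm G π₁ + D).det → IsUnit (B * Mperm G π₂ + D).det →
      ∀ lam : ℂ,
        (((A * Mperm G π₁ + C) * (B * Mperm G π₁ + D)⁻¹ - lam • 1).det = 0 ↔
          ((A * Mperm G π₂ + C) * (B * Mperm G π₂ + D)⁻¹ - lam • 1).det = 0)) := by
  have hdet : ∀ lam : ℂ,
      ((A * Mperm G π₁ + C) - lam • (B * Mperm G π₁ + D)).det =
        ((A * Mperm G π₂ + C) - lam • (B * Mperm G π₂ + D)).det := by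
    intro lam
    rw [hA.pencil_eq hB hC hD, hA.pencil_eq hB hC hD]
    exact det_diagonal_mul_mperm_add_diagonal hG _ _ π₁ π₂
  refine ⟨hdet, fun h₁ h₂ lam => ?_⟩
  rw [det_mul_inv_sub_smul_one_eq_zero_iff h₁, det_mul_inv_sub_smul_one_eq_zero_iff h₂,
    hdet]
end
end
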